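/- arXiv:1704.06464 — 8 statements merged into one kernel-verified Lean document; each statement's English description precedes it below -/
import Mathlib

section
/- Let G be a finite non-Abelian group. Then every connected component of the commuting graph Γ_G is a complete graph (i.e., Γ_G is a disjoint union of complete graphs) if and only if G is an AC-group. -/
open scoped Classical

/-- The commuting graph of a group `G`: its vertices are the non-central
elements of `G`, and two distinct vertices are adjacent iff they commute. -/
noncomputable def commGraph (G : Type*) [Group G] :
    SimpleGraph {g : G // g ∉ Subgroup.center G} where
  Adj x y := x ≠ y ∧ (x : G) * y = (y : G) * x
  symm := ⟨fun _ _ h => ⟨h.1.symm, h.2.symm⟩⟩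
  loopless := ⟨fun _ h => h.1 rfl⟩

lemma adjMatrix_isHermitian {V : Type*} [Fintype V] (Γ : SimpleGraph V) :
    (Γ.adjMatrix ℝ).IsHermitian := by
  ext i j
  simp [Matrix.conjTranspose_apply, SimpleGraph.adj_comm]

/-- The energy of a finite graph: the sum of the absolute values of the
eigenvalues of its adjacency matrix. -/
noncomputable def graphEnergy {V : Type*} [Fintype V] (Γ : SimpleGraph V) : ℝ :=
  ∑ i, |(adjMatrix_isHermitian Γ).eigenvalues i|

/-- `G` is an AC-group: the centralizer of every non-central element is Abelian. -/
def IsACGroup (G : Type*) [Group G] : Prop :=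
  ∀ x : G, x ∉ Subgroup.center G →
    ∀ y ∈ Subgroup.centralizer ({x} : Set G), ∀ z ∈ Subgroup.centralizer ({x} : Set G),
      y * z = z * y

/-!
In an AC-group commuting is transitive through non-central elements: if `x` and `z` both
commute with a non-central `y`, they lie in the Abelian group `C_G(y)`. Walking along a path of
the commuting graph, every vertex therefore commutes with the endpoint, so vertices of one
component are equal or adjacent. Conversely, non-central `y, z` in the centralizer of a
non-central `x` are joined by the path `y - x - z`, so complete components force them to commute.
-/

section

variable {G : Type*} [Group G]

namespace commGraph

theorem eq_or_adj_iff_commute {x y : {g : G // g ∉ Subgroup.center G}} :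
    x = y ∨ (commGraph G).Adj x y ↔ Commute (x : G) y := by
  by_cases hxy : x = y
  · simp only [hxy, true_or, Commute.refl]
  · simp only [hxy, false_or]
    exact and_iff_right hxy

theorem reachable_of_commute {x y : {g : G // g ∉ Subgroup.center G}}
    (h : Commute (x : G) y) : (commGraph G).Reachable x y := by
  rcases eq_or_adj_iff_commute.mpr h with rfl | hadj
  · exact .refl x
  · exact hadj.reachable

end commGraph

theorem IsACGroup.commute_trans (hG : IsACGroup G) {x y z : G} (hy : y ∉ Subgroup.center G)
    (hxy : Commute x y) (hyz : Commute y z) : Commute x z :=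
  hG y hy x (Subgroup.mem_centralizer_singleton_iff.mpr hxy)
    z (Subgroup.mem_centralizer_singleton_iff.mpr hyz.symm)

theorem IsACGroup.commute_of_reachable (hG : IsACGroup G)
    {x y : {g : G // g ∉ Subgroup.center G}} (h : (commGraph G).Reachable x y) :
    Commute (x : G) y := by
  obtain ⟨w⟩ := h
  induction w with
  | nil => exact .refl _
  | @cons u v _ hadj _ ih => exact hG.commute_trans v.2 hadj.2 ih

theorem isACGroup_of_reachable_commute
    (h : ∀ x y : {g : G // g ∉ Subgroup.center G},
      (commGraph G).Reachable x y → Commute (x : G) y) :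
    IsACGroup G := by
  intro x hx y hy z hz
  by_cases hyc : y ∈ Subgroup.center G
  · exact ((Subgroup.mem_center_iff.mp hyc) z).symm
  by_cases hzc : z ∈ Subgroup.center G
  · exact (Subgroup.mem_center_iff.mp hzc) y
  have hyx : Commute y x := Subgroup.mem_centralizer_singleton_iff.mp hy
  have hxz : Commute x z := (Subgroup.mem_centralizer_singleton_iff.mp hz).symm
  exact h ⟨y, hyc⟩ ⟨z, hzc⟩ <|
    (commGraph.reachable_of_commute (y := ⟨x, hx⟩) hyx).trans (commGraph.reachable_of_commute hxz)

end

theorem commGraph_components_complete_iff_isACGroup_general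
    (G : Type*) [Group G] :
    (∀ x y : {g : G // g ∉ Subgroup.center G},
        (commGraph G).Reachable x y → x = y ∨ (commGraph G).Adj x y) ↔ IsACGroup G := by
  simp only [commGraph.eq_or_adj_iff_commute]
  exact ⟨isACGroup_of_reachable_commute, fun hG _ _ => hG.commute_of_reachable⟩

/-- The commuting graph of a finite non-Abelian group is a disjoint union of complete
graphs (i.e. every connected component is complete) iff `G` is an AC-group. -/
theorem commGraph_components_complete_iff_isACGroup
    (G : Type*) [Group G] [Fintype G] (hna : ∃ x y : G, x * y ≠ y * x) :
    (∀ x y : {g : G // g ∉ Subgroup.center G},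
        (commGraph G).Reachable x y → x = y ∨ (commGraph G).Adj x y) ↔ IsACGroup G :=
  commGraph_components_complete_iff_isACGroup_general G
end

section
/- Let G be a finite non-Abelian AC-group and let C_1, …, C_n be the distinct centralizers of non-central elements of G. Then the characteristic polynomial of the adjacency matrix of the commuting graph Γ_G equals (X + 1)^{(Σ_{i=1}^n |C_i|) − n(|Z(G)| + 1)} · Π_{i=1}^n (X − (|C_i| − |Z(G)| − 1)); equivalently, the spectrum of Γ_G consists of the eigenvalue −1 with multiplicity Σ_{i=1}^n |C_i| − n(|Z(G)| + 1) together with the eigenvalues |C_i| − |Z(G)| − 1 for i = 1, …, n. -/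
open scoped Classical

/-!
In an AC-group, two non-central elements commute exactly when they have the same centralizer:
if `x` and `y` commute, then `y ∈ C(x)`, and `C(x)` is Abelian, so `C(x) ≤ C(y)`. Hence
commuting is an equivalence relation on `G ∖ Z(G)` whose classes are the sets `Cᵢ ∖ Z(G)`,
and `Γ_G` is the disjoint union of the complete graphs on them. Its adjacency matrix is block
diagonal, and the adjacency matrix `J - I` of `Kₘ` has characteristic polynomial
`(X + 1)ᵐ⁻¹ (X - (m - 1))` because `J` has rank one.
-/

open Polynomial

theorem SimpleGraph.charpoly_adjMatrix_completeGraph {V R : Type*} [Fintype V] [DecidableEq V]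
    [Nonempty V] [CommRing R] :
    ((completeGraph V).adjMatrix R).charpoly =
      (X + 1) ^ (Fintype.card V - 1) * (X - C ((Fintype.card V : R) - 1)) := by
  have hJ : (Matrix.of 1 : Matrix V V R) = Matrix.vecMulVec 1 1 := by
    ext; simp [Matrix.vecMulVec]
  have hI : (1 : Matrix V V R) = Matrix.scalar V 1 := (map_one _).symm
  rw [adjMatrix_completeGraph_eq_of_one_sub_one, hI, hJ, Matrix.charpoly_sub_scalar,
    Matrix.charpoly_vecMulVec]
  obtain ⟨m, hm⟩ := Nat.exists_eq_add_of_le' (Fintype.card_pos (α := V))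
  simp only [hm, add_tsub_cancel_right, pow_succ, one_dotProduct_one, Nat.cast_add, Nat.cast_one,
    smul_eq_C_mul, map_add, map_natCast, map_one, sub_comp, mul_comp, pow_comp, X_comp, add_comp,
    natCast_comp, one_comp, add_sub_cancel_right]
  ring

theorem SimpleGraph.charpoly_adjMatrix_eq_prod_of_adj_iff {V ι R : Type*} [Fintype V]
    [DecidableEq V] [Fintype ι] [DecidableEq ι] [CommRing R] (Γ : SimpleGraph V)
    [DecidableRel Γ.Adj] (f : V → ι) (hΓ : ∀ v w, Γ.Adj v w ↔ v ≠ w ∧ f v = f w) :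
    (Γ.adjMatrix R).charpoly = ∏ i, ((completeGraph {v // f v = i}).adjMatrix R).charpoly := by
  let : LinearOrder ι := LinearOrder.lift' _ (Fintype.equivFin ι).injective
  have hblock : (Γ.adjMatrix R).BlockTriangular f := fun v w hlt => by
    simp [hΓ, hlt.ne']
  have hdiag (i : ι) : (Γ.adjMatrix R).toSquareBlock f i = (completeGraph _).adjMatrix R := by
    ext v w
    simp [Matrix.toSquareBlock_def, hΓ, Subtype.ext_iff, v.2, w.2]
  simp only [Matrix.charpoly, hblock.charmatrix.det_fintype, ← Matrix.charmatrix_toSquareBlock,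
    hdiag]

theorem Set.natCard_subtype_mem_of_notMem {α : Type*} {s t : Set α} (hst : s ⊆ t)
    (ht : t.Finite) : Nat.card {v : {a // a ∉ s} // (v : α) ∈ t} = t.ncard - s.ncard := by
  rw [Nat.card_congr (Equiv.subtypeSubtypeEquivSubtypeInter _ (· ∈ t)),
    ← Set.ncard_sdiff hst (ht.subset hst), ← Nat.card_coe_set_eq]
  exact Nat.card_congr (Equiv.subtypeEquivRight fun _ => and_comm)

theorem Subgroup.card_center_lt_card_centralizer {G : Type*} [Group G] [Finite G] {x : G}
    (hx : x ∉ center G) : Nat.card (center G) < Nat.card (centralizer {x}) := by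
  have hssub : (center G : Set G) ⊂ centralizer {x} :=
    (Set.ssubset_iff_of_subset (center_le_centralizer _)).2
      ⟨x, mem_centralizer_singleton_iff.2 rfl, hx⟩
  exact Set.ncard_lt_ncard hssub (Set.toFinite _)

namespace IsACGroup

variable {G : Type*} [Group G] {x y : G}

theorem centralizer_le_of_commute (hAC : IsACGroup G) (hx : x ∉ Subgroup.center G)
    (hxy : x * y = y * x) : Subgroup.centralizer {x} ≤ Subgroup.centralizer {y} := fun g hg =>
  Subgroup.mem_centralizer_singleton_iff.2 <|
    hAC x hx g hg y (Subgroup.mem_centralizer_singleton_iff.2 hxy.symm)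

theorem centralizer_eq_iff (hAC : IsACGroup G) (hx : x ∉ Subgroup.center G)
    (hy : y ∉ Subgroup.center G) :
    Subgroup.centralizer {x} = Subgroup.centralizer {y} ↔ x * y = y * x := by
  refine ⟨fun h => ?_, fun h => ?_⟩
  · have hy' : y ∈ Subgroup.centralizer {x} := h ▸ Subgroup.mem_centralizer_singleton_iff.2 rfl
    exact (Subgroup.mem_centralizer_singleton_iff.1 hy').symm
  · exact (hAC.centralizer_le_of_commute hx h).antisymm (hAC.centralizer_le_of_commute hy h.symm)

end IsACGroup

open Polynomial in
theorem charpoly_commGraph_of_isACGroup_general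
    (G : Type*) [Group G] [Fintype G]
    (hAC : IsACGroup G)
    (n : ℕ) (C : Fin n → Subgroup G)
    (hCinj : Function.Injective C)
    (hCcent : ∀ i, ∃ x : G, x ∉ Subgroup.center G ∧ C i = Subgroup.centralizer {x})
    (hCall : ∀ x : G, x ∉ Subgroup.center G → ∃ i, C i = Subgroup.centralizer {x}) :
    ((commGraph G).adjMatrix ℝ).charpoly =
      (X + 1) ^ (∑ i, Nat.card (C i) - n * (Nat.card (Subgroup.center G) + 1)) *
        ∏ i, (X - Polynomial.C ((Nat.card (C i) : ℝ) - (Nat.card (Subgroup.center G) : ℝ) - 1)) := by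
  choose f hf using fun v : {g : G // g ∉ Subgroup.center G} => hCall v v.2
  have hadj v w : (commGraph G).Adj v w ↔ v ≠ w ∧ f v = f w := by
    rw [← hCinj.eq_iff, hf, hf, hAC.centralizer_eq_iff v.2 w.2]
    rfl
  have hfiber i v : f v = i ↔ (v : G) ∈ C i := by
    obtain ⟨x, hx, hCx⟩ := hCcent i
    rw [← hCinj.eq_iff, hf, hCx, hAC.centralizer_eq_iff v.2 hx,
      Subgroup.mem_centralizer_singleton_iff]
  have hcard i : Fintype.card {v // f v = i} = Nat.card (C i) - Nat.card (Subgroup.center G) := by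
    obtain ⟨x, -, hCx⟩ := hCcent i
    rw [← Nat.card_eq_fintype_card, Nat.card_congr (Equiv.subtypeEquivRight (hfiber i))]
    exact Set.natCard_subtype_mem_of_notMem (hCx ▸ Subgroup.center_le_centralizer _)
      (Set.toFinite _)
  have hlt i : Nat.card (Subgroup.center G) < Nat.card (C i) := by
    obtain ⟨x, hx, hCx⟩ := hCcent i
    exact hCx ▸ Subgroup.card_center_lt_card_centralizer hx
  have hblock i : ((SimpleGraph.completeGraph {v // f v = i}).adjMatrix ℝ).charpoly =
      (X + 1) ^ (Nat.card (C i) - Nat.card (Subgroup.center G) - 1) *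
        (X - Polynomial.C ((Nat.card (C i) : ℝ) - (Nat.card (Subgroup.center G) : ℝ) - 1)) := by
    have : Nonempty {v // f v = i} :=
      Fintype.card_pos_iff.1 (hcard i ▸ Nat.sub_pos_of_lt (hlt i))
    rw [SimpleGraph.charpoly_adjMatrix_completeGraph, hcard, Nat.cast_sub (hlt i).le]
  rw [(commGraph G).charpoly_adjMatrix_eq_prod_of_adj_iff f hadj]
  simp only [hblock, Finset.prod_mul_distrib, Finset.prod_pow_eq_pow_sum, Nat.sub_sub]
  rw [Finset.sum_tsub_distrib _ fun i _ => hlt i, Finset.sum_const, Finset.card_univ,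
    Fintype.card_fin, smul_eq_mul]

open Polynomial in
/-- The characteristic polynomial of the adjacency matrix of the commuting graph of a
finite non-Abelian AC-group, where `C 1, …, C n` are the distinct centralizers of
non-central elements. -/
theorem charpoly_commGraph_of_isACGroup
    (G : Type*) [Group G] [Fintype G] (hna : ∃ x y : G, x * y ≠ y * x)
    (hAC : IsACGroup G)
    (n : ℕ) (C : Fin n → Subgroup G)
    (hCinj : Function.Injective C)
    (hCcent : ∀ i, ∃ x : G, x ∉ Subgroup.center G ∧ C i = Subgroup.centralizer {x})
    (hCall : ∀ x : G, x ∉ Subgroup.center G → ∃ i, C i = Subgroup.centralizer {x}) :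
    ((commGraph G).adjMatrix ℝ).charpoly =
      (X + 1) ^ (∑ i, Nat.card (C i) - n * (Nat.card (Subgroup.center G) + 1)) *
        ∏ i, (X - Polynomial.C ((Nat.card (C i) : ℝ) - (Nat.card (Subgroup.center G) : ℝ) - 1)) :=
  charpoly_commGraph_of_isACGroup_general G hAC n C hCinj hCcent hCall
end

section
/- Let G be a finite non-Abelian AC-group and let C_1, …, C_n be the distinct centralizers of non-central elements of G. Then the energy of the commuting graph Γ_G equals 2·Σ_{i=1}^n (|C_i| − |Z(G)| − 1), that is, E(Γ_G) = 2(Σ_{i=1}^n |C_i|) − 2n(|Z(G)| + 1). -/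
/-! In an AC-group two non-central elements commute iff they have the same centralizer, so `Γ_G`
is the disjoint union of the cliques `Cᵢ ∖ Z(G)`. For a disjoint union of cliques the adjacency
matrix satisfies `A + 1 = P Pᵀ` with `P` the block-indicator matrix. Hence `λ + 1` is `0` or a
block size for every eigenvalue `λ` of `A`, the multiplicity of `-1` is `|V| - rank P = |V| - n`,
and as `tr A = 0`, `E = ∑ |λ| = ∑ λ + 2 · #{λ = -1} = 2 (|V| - n)`. -/

open scoped Classical

namespace Matrix

theorem IsHermitian.rank_sub_smul_one {𝕜 n : Type*} [RCLike 𝕜] [Fintype n] [DecidableEq n]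
    {A : Matrix n n 𝕜} (hA : A.IsHermitian) (μ : ℝ) :
    (A - (μ : 𝕜) • 1).rank = Fintype.card {i // hA.eigenvalues i ≠ μ} := by
  have hdiag : A - (μ : 𝕜) • 1 = Unitary.conjStarAlgAut 𝕜 _ hA.eigenvectorUnitary
      (diagonal (RCLike.ofReal ∘ fun i => hA.eigenvalues i - μ)) := by
    conv_lhs => rw [hA.spectral_theorem]
    rw [← map_one (Unitary.conjStarAlgAut 𝕜 _ hA.eigenvectorUnitary), ← map_smul,
      ← map_sub]
    congr 1
    ext i j
    by_cases h : i = j <;> simp [h, Algebra.algebraMap_eq_smul_one, sub_smul]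
  rw [hdiag, Unitary.conjStarAlgAut_apply, ← Unitary.coe_star]
  simp [-isUnit_iff_ne_zero, -Unitary.coe_star, rank_diagonal, sub_eq_zero]

theorem eq_zero_or_mem_range_of_mul_transpose_mulVec_eq_smul {R m k : Type*} [CommRing R]
    [IsDomain R] [Fintype m] [Fintype k] [DecidableEq k] {P : Matrix m k R} {d : k → R}
    (hd : Pᵀ * P = diagonal d) {v : m → R} (hv : v ≠ 0) {μ : R}
    (hμ : (P * Pᵀ) *ᵥ v = μ • v) : μ = 0 ∨ μ ∈ Set.range d := by
  set u := Pᵀ *ᵥ v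
  have hPu : P *ᵥ u = μ • v := by rw [← hμ, mulVec_mulVec]
  by_cases hu : u = 0
  · left
    rw [hu, mulVec_zero, eq_comm, smul_eq_zero] at hPu
    exact hPu.resolve_right hv
  right
  obtain ⟨j, hj⟩ := Function.ne_iff.mp hu
  have hdu : diagonal d *ᵥ u = μ • u := by
    rw [← hd, ← mulVec_mulVec, hPu, mulVec_smul]
  have := congrFun hdu j
  rw [mulVec_diagonal, Pi.smul_apply, smul_eq_mul] at this
  exact ⟨j, mul_right_cancel₀ hj this⟩

end Matrix

section FiberIndicator

open Matrix

variable {V ι R : Type*} [DecidableEq ι]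

def fiberIndicator [Zero R] [One R] (f : V → ι) : Matrix V ι R :=
  of fun x j => if f x = j then 1 else 0

theorem fiberIndicator_transpose_mul_self [Fintype V] [NonAssocSemiring R] (f : V → ι) :
    (fiberIndicator f : Matrix V ι R)ᵀ * (fiberIndicator f : Matrix V ι R) =
      diagonal fun j => (Fintype.card {x // f x = j} : R) := by
  ext i j
  simp only [fiberIndicator, mul_apply, transpose_apply, of_apply, diagonal_apply, boole_mul,
    ← ite_and]
  by_cases h : i = j
  · simp [h, Fintype.card_subtype]
  · have : ∀ x, ¬(f x = i ∧ f x = j) := fun x hx => h (hx.1.symm.trans hx.2)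
    simp [h, this]

theorem fiberIndicator_mul_transpose_self [Fintype ι] [NonAssocSemiring R] (f : V → ι) :
    (fiberIndicator f : Matrix V ι R) * (fiberIndicator f : Matrix V ι R)ᵀ =
      of fun x y => if f x = f y then (1 : R) else 0 := by
  ext x y
  simp [fiberIndicator, mul_apply]

theorem rank_fiberIndicator [Fintype V] [Fintype ι] {f : V → ι} (hf : Function.Surjective f) :
    (fiberIndicator f : Matrix V ι ℝ).rank = Fintype.card ι := by
  rw [← rank_transpose_mul_self, fiberIndicator_transpose_mul_self, rank_diagonal]
  have hne (i : ι) : (Fintype.card {x // f x = i} : ℝ) ≠ 0 := by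
    obtain ⟨x, hx⟩ := hf i
    exact_mod_cast (Fintype.card_pos_iff (α := {x // f x = i}).mpr ⟨⟨x, hx⟩⟩).ne'
  exact Fintype.card_congr (Equiv.subtypeUnivEquiv hne)

end FiberIndicator

section CliqueUnion

open Matrix Finset

variable {V ι : Type*} [Fintype ι] [DecidableEq ι]

theorem adjMatrix_add_one_eq_fiberIndicator_mul_transpose {Γ : SimpleGraph V} {f : V → ι}
    (hadj : ∀ x y, Γ.Adj x y ↔ x ≠ y ∧ f x = f y) :
    Γ.adjMatrix ℝ + 1 =
      (fiberIndicator f : Matrix V ι ℝ) * (fiberIndicator f : Matrix V ι ℝ)ᵀ := by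
  rw [fiberIndicator_mul_transpose_self]
  ext x y
  by_cases h : x = y
  · simp [h]
  · simp [h, one_apply, hadj]

theorem graphEnergy_eq_of_adj_iff [Fintype V] {Γ : SimpleGraph V} {f : V → ι}
    (hf : Function.Surjective f) (hadj : ∀ x y, Γ.Adj x y ↔ x ≠ y ∧ f x = f y) :
    graphEnergy Γ = 2 * ((Nat.card V : ℝ) - Nat.card ι) := by
  set hA := adjMatrix_isHermitian Γ
  set P : Matrix V ι ℝ := fiberIndicator f
  have hP := adjMatrix_add_one_eq_fiberIndicator_mul_transpose hadj
  have hspec (i : V) : hA.eigenvalues i = -1 ∨ 0 ≤ hA.eigenvalues i := by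
    have hv : (P * Pᵀ) *ᵥ hA.eigenvectorBasis i =
        (hA.eigenvalues i + 1) • hA.eigenvectorBasis i := by
      rw [← hP, add_mulVec, hA.mulVec_eigenvectorBasis, one_mulVec, add_smul, one_smul]
    have hv0 : ⇑(hA.eigenvectorBasis i) ≠ 0 :=
      (WithLp.ofLp_eq_zero 2).ne.2 (hA.eigenvectorBasis.orthonormal.ne_zero i)
    rcases eq_zero_or_mem_range_of_mul_transpose_mulVec_eq_smul
      (fiberIndicator_transpose_mul_self f) hv0 hv with h | ⟨j, hj⟩
    · left
      linarith
    · right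
      obtain ⟨x, hx⟩ := hf j
      have : (1 : ℝ) ≤ Fintype.card {x // f x = j} := by
        exact_mod_cast Fintype.card_pos_iff (α := {x // f x = j}).mpr ⟨⟨x, hx⟩⟩
      linarith
  have hrank : Fintype.card {i // hA.eigenvalues i ≠ -1} = Fintype.card ι := by
    have hshift : Γ.adjMatrix ℝ - (-1 : ℝ) • 1 = P * Pᵀ := by
      rw [← hP]
      simp
    rw [← hA.rank_sub_smul_one, RCLike.ofReal_real_eq_id, id_eq, hshift, rank_self_mul_transpose,
      rank_fiberIndicator hf]
  have habs (i : V) :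
      |hA.eigenvalues i| = hA.eigenvalues i + 2 * if hA.eigenvalues i = -1 then 1 else 0 := by
    rcases hspec i with h | h
    · norm_num [h]
    · simp [abs_of_nonneg h, show hA.eigenvalues i ≠ -1 by linarith]
  have htrace : ∑ i, hA.eigenvalues i = 0 := by
    simpa using (hA.trace_eq_sum_eigenvalues).symm.trans (Γ.trace_adjMatrix ℝ)
  have hcard : #{i | hA.eigenvalues i = -1} + Fintype.card {i // hA.eigenvalues i ≠ -1} =
      Fintype.card V := by
    rw [Fintype.card_subtype, card_filter_add_card_filter_not, card_univ]
  calc graphEnergy Γ = ∑ i, |hA.eigenvalues i| := rfl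
    _ = ∑ i, hA.eigenvalues i + 2 * #{i | hA.eigenvalues i = -1} := by
      simp_rw [habs, sum_add_distrib, ← mul_sum, sum_boole]
    _ = 2 * ((Nat.card V : ℝ) - Nat.card ι) := by
      rw [htrace, Nat.card_eq_fintype_card, Nat.card_eq_fintype_card, ← hrank, ← hcard]
      push_cast
      ring

end CliqueUnion

section Counting

variable {G : Type*} [Group G] [Fintype G]

theorem Subgroup.card_eq_card_notMem_add_card {K H : Subgroup G} (hKH : K ≤ H) :
    Nat.card H = Fintype.card {v : {g // g ∉ K} // ↑v ∈ H} + Nat.card K := by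
  rw [Fintype.card_congr (Equiv.subtypeSubtypeEquivSubtypeInter _ _), Nat.card_eq_fintype_card,
    Nat.card_eq_fintype_card, Fintype.card_subtype, Fintype.card_subtype, Fintype.card_subtype,
    add_comm, ← Finset.card_filter_add_card_filter_not (s := {g | g ∈ H}) (fun g => g ∈ K)]
  simp only [Finset.filter_filter, and_comm (a := _ ∈ H)]
  congr 2
  ext g
  simpa using fun hg => hKH hg

theorem Subgroup.sum_card_eq_of_partition {ι : Type*} [Fintype ι] {K : Subgroup G}
    {C : ι → Subgroup G} (hK : ∀ i, K ≤ C i) {f : {g // g ∉ K} → ι}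
    (hf : ∀ v i, f v = i ↔ ↑v ∈ C i) :
    ∑ i, Nat.card (C i) = Nat.card {g // g ∉ K} + Nat.card ι * Nat.card K := by
  have hfiber (i : ι) : Nat.card (C i) = Fintype.card {v // f v = i} + Nat.card K := by
    rw [Subgroup.card_eq_card_notMem_add_card (hK i)]
    congr 1
    exact Fintype.card_congr (Equiv.subtypeEquivRight fun v => (hf v i).symm)
  rw [Finset.sum_congr rfl fun i _ => hfiber i, Finset.sum_add_distrib, ← Fintype.card_sigma,
    Fintype.card_congr (Equiv.sigmaFiberEquiv f), Finset.sum_const, Finset.card_univ, smul_eq_mul,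
    Nat.card_eq_fintype_card (α := {g // g ∉ K}), Nat.card_eq_fintype_card (α := ι)]

end Counting

namespace IsACGroup

open Subgroup

variable {G : Type*} [Group G]

theorem centralizer_le_of_mem_centralizer (hAC : IsACGroup G) {x z : G} (hx : x ∉ center G)
    (hz : z ∈ centralizer {x}) : centralizer {x} ≤ centralizer {z} :=
  fun _ hg => mem_centralizer_singleton_iff.mpr (hAC x hx _ hg z hz)

theorem centralizer_eq_of_mem_centralizer (hAC : IsACGroup G) {x z : G} (hx : x ∉ center G)
    (hz : z ∉ center G) (h : x ∈ centralizer {z}) : centralizer {x} = centralizer {z} := by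
  have h' : z ∈ centralizer {x} := mem_centralizer_singleton_iff.mpr
    (mem_centralizer_singleton_iff.mp h).symm
  exact le_antisymm (hAC.centralizer_le_of_mem_centralizer hx h')
    (hAC.centralizer_le_of_mem_centralizer hz h)

theorem index_eq_iff_mem (hAC : IsACGroup G) {ι : Type*} {C : ι → Subgroup G}
    (hCinj : Function.Injective C)
    (hCcent : ∀ i, ∃ x : G, x ∉ center G ∧ C i = centralizer {x})
    {f : {g // g ∉ center G} → ι} (hf : ∀ v, C (f v) = centralizer {(v : G)})
    (v : {g // g ∉ center G}) (i : ι) : f v = i ↔ ↑v ∈ C i := by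
  obtain ⟨z, hz, hCz⟩ := hCcent i
  constructor
  · rintro rfl
    rw [hf]
    exact mem_centralizer_singleton_iff.mpr rfl
  · intro hv
    rw [hCz] at hv
    exact hCinj (by rw [hf, hCz, hAC.centralizer_eq_of_mem_centralizer v.2 hz hv])

end IsACGroup

theorem energy_commGraph_of_isACGroup_general
    (G : Type*) [Group G] [Fintype G]
    (hAC : IsACGroup G)
    (n : ℕ) (C : Fin n → Subgroup G)
    (hCinj : Function.Injective C)
    (hCcent : ∀ i, ∃ x : G, x ∉ Subgroup.center G ∧ C i = Subgroup.centralizer {x})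
    (hCall : ∀ x : G, x ∉ Subgroup.center G → ∃ i, C i = Subgroup.centralizer {x}) :
    graphEnergy (commGraph G) =
      2 * (∑ i, (Nat.card (C i) : ℝ)) -
        2 * n * ((Nat.card (Subgroup.center G) : ℝ) + 1) := by
  choose f hf using fun v : {g // g ∉ Subgroup.center G} => hCall v v.2
  have hindex := hAC.index_eq_iff_mem hCinj hCcent hf
  have hsurj : Function.Surjective f := fun i => by
    obtain ⟨z, hz, hCz⟩ := hCcent i
    exact ⟨⟨z, hz⟩,
      (hindex _ i).mpr (hCz ▸ Subgroup.mem_centralizer_singleton_iff.mpr rfl)⟩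
  have hadj (v w : {g // g ∉ Subgroup.center G}) :
      (commGraph G).Adj v w ↔ v ≠ w ∧ f v = f w := by
    rw [hindex, hf, Subgroup.mem_centralizer_singleton_iff]
    exact Iff.rfl
  have hcenter (i : Fin n) : Subgroup.center G ≤ C i := by
    obtain ⟨z, -, hCz⟩ := hCcent i
    exact hCz ▸ Subgroup.center_le_centralizer _
  have hsum := Subgroup.sum_card_eq_of_partition hcenter hindex
  rw [graphEnergy_eq_of_adj_iff hsurj hadj, ← Nat.cast_sum, hsum]
  push_cast
  rw [Nat.card_eq_fintype_card (α := Fin n), Fintype.card_fin]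
  ring

/-- The energy of the commuting graph of a finite non-Abelian AC-group, where
`C 1, …, C n` are the distinct centralizers of non-central elements:
`E(Γ_G) = 2 ∑ᵢ |Cᵢ| - 2 n (|Z(G)| + 1)`. -/
theorem energy_commGraph_of_isACGroup
    (G : Type*) [Group G] [Fintype G] (hna : ∃ x y : G, x * y ≠ y * x)
    (hAC : IsACGroup G)
    (n : ℕ) (C : Fin n → Subgroup G)
    (hCinj : Function.Injective C)
    (hCcent : ∀ i, ∃ x : G, x ∉ Subgroup.center G ∧ C i = Subgroup.centralizer {x})
    (hCall : ∀ x : G, x ∉ Subgroup.center G → ∃ i, C i = Subgroup.centralizer {x}) :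
    graphEnergy (commGraph G) =
      2 * (∑ i, (Nat.card (C i) : ℝ)) -
        2 * n * ((Nat.card (Subgroup.center G) : ℝ) + 1) :=
  energy_commGraph_of_isACGroup_general G hAC n C hCinj hCcent hCall
end

section
/- Let n ≥ 4 and let QD_{2^n} = ⟨a, b : a^{2^{n-1}} = b² = 1, b a b^{-1} = a^{2^{n-2} − 1}⟩ be the quasidihedral group of order 2^n. Then the energy of the commuting graph is E(Γ_{QD_{2^n}}) = 2^n + 2^{n−1} − 6. -/
/-!
The commuting graph of `QD_{2^n}` is a disjoint union of cliques: the `2^(n-1) - 2` non-central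
powers of `a` form one clique, and every other element `x` commutes, among non-central elements,
only with itself and `a^(2^(n-2)) x`. In a disjoint union of cliques, `(A + 1)²` acts on
`(A + 1) v` at a vertex `x` as multiplication by `deg x + 1`, so every eigenvalue of the adjacency
matrix `A` is `-1` or a vertex degree. With degrees `1` and `d` the eigenvalues `λ` thus lie in
`{-1, 1, d}`, where `|λ| (d + 1) = λ² + d`; summing and using `∑ λ² = tr A² = ∑ deg` gives the
energy.
-/

open scoped Classical

open Finset

namespace Matrix.IsHermitian

variable {n 𝕜 : Type*} [Fintype n] [DecidableEq n] [RCLike 𝕜] {A : Matrix n n 𝕜}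

theorem trace_cfc (hA : A.IsHermitian) (f : ℝ → ℝ) :
    (cfc f A).trace = ∑ i, (f (hA.eigenvalues i) : 𝕜) := by
  rw [hA.cfc_eq, IsHermitian.cfc, Unitary.conjStarAlgAut_apply, trace_mul_cycle,
    Unitary.coe_star_mul_self, one_mul, trace_diagonal]
  rfl

theorem trace_mul_self (hA : A.IsHermitian) :
    (A * A).trace = ∑ i, ((hA.eigenvalues i ^ 2 : ℝ) : 𝕜) := by
  rw [← sq, ← cfc_pow_id (R := ℝ) A 2 hA.isSelfAdjoint, hA.trace_cfc]

end Matrix.IsHermitian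

namespace SimpleGraph

open Matrix

variable {V : Type*} [Fintype V] (Γ : SimpleGraph V)

/-- `Γ` is a disjoint union of cliques: adjacency is transitive on distinct vertices. -/
def IsCluster : Prop :=
  ∀ ⦃x y z : V⦄, Γ.Adj x y → Γ.Adj y z → x ≠ z → Γ.Adj x z

variable {Γ}

theorem IsCluster.insert_neighborFinset_eq (hΓ : Γ.IsCluster) {x y : V}
    (hy : y ∈ insert x (Γ.neighborFinset x)) :
    insert y (Γ.neighborFinset y) = insert x (Γ.neighborFinset x) := by
  rcases mem_insert.1 hy with rfl | hxy
  · rfl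
  rw [mem_neighborFinset] at hxy
  ext z
  simp only [mem_insert, mem_neighborFinset]
  constructor
  · rintro (rfl | hyz)
    · exact Or.inr hxy
    · by_cases hxz : x = z
      · exact Or.inl hxz.symm
      · exact Or.inr (hΓ hxy hyz hxz)
  · rintro (rfl | hxz)
    · exact Or.inr hxy.symm
    · by_cases hyz : y = z
      · exact Or.inl hyz.symm
      · exact Or.inr (hΓ hxy.symm hxz hyz)

theorem adjMatrix_add_one_mulVec_apply {α : Type*} [NonAssocSemiring α] (v : V → α) (x : V) :
    ((Γ.adjMatrix α + 1) *ᵥ v) x = ∑ u ∈ insert x (Γ.neighborFinset x), v u := by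
  rw [add_mulVec, one_mulVec, Pi.add_apply, adjMatrix_mulVec_apply,
    sum_insert (Γ.notMem_neighborFinset_self x), add_comm]

theorem IsCluster.adjMatrix_add_one_mulVec_mulVec_apply (hΓ : Γ.IsCluster) {α : Type*}
    [NonAssocSemiring α] (v : V → α) (x : V) :
    ((Γ.adjMatrix α + 1) *ᵥ ((Γ.adjMatrix α + 1) *ᵥ v)) x =
      (Γ.degree x + 1) * ((Γ.adjMatrix α + 1) *ᵥ v) x := by
  simp only [adjMatrix_add_one_mulVec_apply]
  rw [sum_congr rfl fun u hu => by rw [hΓ.insert_neighborFinset_eq hu], sum_const,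
    card_insert_of_notMem (Γ.notMem_neighborFinset_self x), card_neighborFinset_eq_degree,
    nsmul_eq_mul]
  push_cast
  rfl

theorem IsCluster.eigenvalues_eq_neg_one_or_degree (hΓ : Γ.IsCluster) (i : V) :
    (adjMatrix_isHermitian Γ).eigenvalues i = -1 ∨
      ∃ x, (adjMatrix_isHermitian Γ).eigenvalues i = Γ.degree x := by
  set hA := adjMatrix_isHermitian Γ
  set μ := hA.eigenvalues i
  set v : V → ℝ := ⇑(hA.eigenvectorBasis i)
  have hv : v ≠ 0 := (WithLp.ofLp_eq_zero 2).ne.2 (hA.eigenvectorBasis.orthonormal.ne_zero i)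
  have hBv : (Γ.adjMatrix ℝ + 1) *ᵥ v = (μ + 1) • v := by
    rw [add_mulVec, hA.mulVec_eigenvectorBasis i, one_mulVec, add_smul, one_smul]
  obtain ⟨x, hx⟩ := Function.ne_iff.1 hv
  have key := hΓ.adjMatrix_add_one_mulVec_mulVec_apply v x
  rw [hBv, mulVec_smul, hBv] at key
  simp only [Pi.smul_apply, smul_eq_mul, Pi.zero_apply] at key hx
  have : (μ + 1) * (μ - Γ.degree x) * v x = 0 := by linear_combination key
  rcases mul_eq_zero.1 this with h | h
  · rcases mul_eq_zero.1 h with h | h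
    · exact Or.inl (by linarith)
    · exact Or.inr ⟨x, by linarith⟩
  · exact absurd h hx

theorem IsCluster.graphEnergy_mul_eq (hΓ : Γ.IsCluster) (d : ℕ)
    (hdeg : ∀ x, Γ.degree x = 1 ∨ Γ.degree x = d) :
    graphEnergy Γ * (d + 1) = ∑ x, ((Γ.degree x : ℝ) + d) := by
  set hA := adjMatrix_isHermitian Γ
  have habs : ∀ i, |hA.eigenvalues i| * (d + 1) = hA.eigenvalues i ^ 2 + d := by
    intro i
    rcases hΓ.eigenvalues_eq_neg_one_or_degree i with h | ⟨x, h⟩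
    · rw [h, abs_neg, abs_one]
      ring
    · rcases hdeg x with hx | hx <;> rw [h, hx] <;> push_cast <;>
        rw [abs_of_nonneg (by positivity)] <;> ring
  have htrace : ∑ i, hA.eigenvalues i ^ 2 = ∑ x, (Γ.degree x : ℝ) := by
    calc ∑ i, hA.eigenvalues i ^ 2 = (Γ.adjMatrix ℝ * Γ.adjMatrix ℝ).trace :=
          hA.trace_mul_self.symm
      _ = ∑ x, (Γ.degree x : ℝ) := by
          simp only [trace, diag_apply, adjMatrix_mul_self_apply_self]
  calc graphEnergy Γ * (d + 1) = ∑ i, |hA.eigenvalues i| * (d + 1) := sum_mul ..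
    _ = ∑ i, (hA.eigenvalues i ^ 2 + d) := sum_congr rfl fun i _ => habs i
    _ = ∑ x, ((Γ.degree x : ℝ) + d) := by rw [sum_add_distrib, sum_add_distrib, htrace]

end SimpleGraph

section CommGraph

variable {G : Type*} [Group G]

theorem commGraph_adj_iff {x y : {g : G // g ∉ Subgroup.center G}} :
    (commGraph G).Adj x y ↔ x ≠ y ∧ Commute (x : G) y :=
  Iff.rfl

theorem isCluster_commGraph
    (hG : ∀ y ∉ Subgroup.center G, ∀ u v : G, Commute y u → Commute y v → Commute u v) :
    (commGraph G).IsCluster := fun x y z hxy hyz hxz =>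
  ⟨hxz, hG y y.2 x z (commGraph_adj_iff.1 hxy).2.symm (commGraph_adj_iff.1 hyz).2⟩

theorem commGraph_degree_add_one [Fintype G] (x : {g : G // g ∉ Subgroup.center G}) :
    (commGraph G).degree x + 1 = #{g : G | g ∉ Subgroup.center G ∧ Commute (x : G) g} := by
  have hclosed : insert x ((commGraph G).neighborFinset x) =
      ({y | Commute (x : G) (y : G)} : Finset {g : G // g ∉ Subgroup.center G}) := by
    ext y
    rw [mem_insert, SimpleGraph.mem_neighborFinset, commGraph_adj_iff, mem_filter_univ]
    by_cases hxy : x = y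
    · simp [hxy]
    · simp [hxy, eq_comm]
  rw [← SimpleGraph.card_neighborFinset_eq_degree,
    ← card_insert_of_notMem (SimpleGraph.notMem_neighborFinset_self _ _), hclosed,
    ← card_map (Function.Embedding.subtype _)]
  congr 1
  ext g
  simp [and_comm]

end CommGraph

open Subgroup

section Quasidihedral

variable {G : Type*} [Group G] {a b x y : G} {k : ℕ}

theorem pow_two_pow_sub_two_eq_one_iff {M : Type*} [Monoid M] {h : M} (hk : 2 ≤ k)
    (hh : h ^ 2 ^ (k + 1) = 1) : h ^ (2 ^ k - 2) = 1 ↔ h ^ 2 = 1 := by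
  have hk' : 2 ^ k = 2 * 2 ^ (k - 1) := by rw [← pow_succ']; congr 1; omega
  have hodd : Odd (2 ^ (k - 1) - 1) := by
    have : 2 ^ (k - 1) = 2 * 2 ^ (k - 2) := by rw [← pow_succ']; congr 1; omega
    exact ⟨2 ^ (k - 2) - 1, by have := Nat.one_le_two_pow (n := k - 2); omega⟩
  have hgcd : Nat.gcd (2 ^ k - 2) (2 ^ (k + 1)) = 2 := by
    rw [hk', pow_succ', hk', show 2 * 2 ^ (k - 1) - 2 = 2 * (2 ^ (k - 1) - 1) by omega,
      Nat.gcd_mul_left, ← hk', (Nat.coprime_two_right.2 hodd).pow_right k, mul_one]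
  constructor
  · intro h
    rw [← hgcd]
    exact pow_gcd_eq_one.2 ⟨h, hh⟩
  · intro h
    rw [hk', show 2 * 2 ^ (k - 1) - 2 = 2 * (2 ^ (k - 1) - 1) by omega, pow_mul, h, one_pow]

theorem sq_eq_one_iff_of_mem_zpowers {m : ℕ} (ha : orderOf a = 2 * m) (hx : x ∈ zpowers a) :
    x ^ 2 = 1 ↔ x = 1 ∨ x = a ^ m := by
  have ham : (a ^ m) ^ 2 = 1 := by rw [← pow_mul, mul_comm, ← ha, pow_orderOf_eq_one]
  have ham' : (a ^ m) ^ (2 : ℤ) = 1 := by exact_mod_cast ham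
  obtain ⟨j, rfl⟩ := mem_zpowers_iff.1 hx
  refine ⟨fun h => ?_, ?_⟩
  · have hdvd : (orderOf a : ℤ) ∣ j * 2 := by
      rw [orderOf_dvd_iff_zpow_eq_one, zpow_mul]
      exact_mod_cast h
    rw [ha, Nat.cast_mul, Nat.cast_two, mul_comm j] at hdvd
    obtain ⟨t, rfl⟩ := Int.dvd_of_mul_dvd_mul_left two_ne_zero hdvd
    rcases Int.even_or_odd t with ⟨s, rfl⟩ | ⟨s, rfl⟩
    · left
      rw [zpow_mul, zpow_natCast, ← two_mul, zpow_mul, ham', one_zpow]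
    · right
      rw [zpow_mul, zpow_natCast, zpow_add_one, zpow_mul, ham', one_zpow, one_mul]
  · rintro (h | h) <;> rw [h]
    · exact one_pow 2
    · exact ham

theorem commute_of_mem_zpowers (hx : x ∈ zpowers a) (hy : y ∈ zpowers a) : Commute x y := by
  obtain ⟨i, rfl⟩ := mem_zpowers_iff.1 hx
  obtain ⟨j, rfl⟩ := mem_zpowers_iff.1 hy
  exact Commute.zpow_zpow_self a i j

theorem mem_zpowers_or_mul_mem_zpowers {r : ℕ} (hb : b ^ 2 = 1) (hrel : b * a * b⁻¹ = a ^ r)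
    (hgen : closure {a, b} = ⊤) (g : G) : g ∈ zpowers a ∨ g * b ∈ zpowers a := by
  have hbinv : b⁻¹ = b := inv_eq_of_mul_eq_one_right (by rw [← sq, hb])
  have hconj : ∀ h ∈ zpowers a, b * h * b ∈ zpowers a := by
    intro h hh
    obtain ⟨j, rfl⟩ := mem_zpowers_iff.1 hh
    nth_rewrite 2 [← hbinv]
    rw [← conj_zpow, hrel]
    exact zpow_mem (pow_mem (mem_zpowers a) r) j
  have hmul_mem : ∀ x ∈ zpowers a, ∀ y, y ∈ zpowers a ∨ y * b ∈ zpowers a →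
      x * y ∈ zpowers a ∨ x * y * b ∈ zpowers a := fun x hx y hy =>
    hy.imp (mul_mem hx) fun h => by rw [mul_assoc]; exact mul_mem hx h
  have hmul_b : ∀ y, y ∈ zpowers a ∨ y * b ∈ zpowers a →
      b * y ∈ zpowers a ∨ b * y * b ∈ zpowers a := by
    rintro y (hy | hy)
    · exact Or.inr (hconj y hy)
    · left
      simpa [mul_assoc, ← sq, hb] using hconj _ hy
  refine closure_induction_left (p := fun g _ => g ∈ zpowers a ∨ g * b ∈ zpowers a)
    (Or.inl (one_mem _)) ?_ ?_ (hgen ▸ mem_top g)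
  · rintro x (rfl | rfl) y - hy
    · exact hmul_mem x (mem_zpowers x) y hy
    · exact hmul_b y hy
  · rintro x (rfl | rfl) y - hy
    · exact hmul_mem _ (inv_mem (mem_zpowers x)) y hy
    · rw [hbinv]
      exact hmul_b y hy

/-- `a` and `b` generate `G` as the quasidihedral group `QD_{2^(k+2)}`, with `G = ⟨a⟩ ∪ ⟨a⟩ b`. -/
structure IsQuasidihedralPair (a b : G) (k : ℕ) : Prop where
  two_le : 2 ≤ k
  orderOf_eq : orderOf a = 2 ^ (k + 1)
  sq_eq_one : b ^ 2 = 1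
  conj_eq : b * a * b⁻¹ = a ^ (2 ^ k - 1)
  notMem_zpowers : b ∉ zpowers a
  mem_or_mul_mem : ∀ g, g ∈ zpowers a ∨ g * b ∈ zpowers a

theorem isQuasidihedralPair_of_card (hk : 2 ≤ k) (ha : a ^ 2 ^ (k + 1) = 1) (hb : b ^ 2 = 1)
    (hrel : b * a * b⁻¹ = a ^ (2 ^ k - 1)) (hgen : closure {a, b} = ⊤)
    (hcard : Nat.card G = 2 ^ (k + 2)) : IsQuasidihedralPair a b k := by
  have hcover := mem_zpowers_or_mul_mem_zpowers hb hrel hgen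
  have horder : orderOf a ≤ 2 ^ (k + 1) := orderOf_le_of_pow_eq_one (by positivity) ha
  have hindex : (zpowers a).index * orderOf a = 2 ^ (k + 2) := by
    rw [← Nat.card_zpowers, index_mul_card, hcard]
  have hbH : b ∉ zpowers a := by
    intro hbH
    have htop : zpowers a = ⊤ := eq_top_iff.2 fun g _ =>
      (hcover g).elim id fun h => by simpa using mul_mem h (inv_mem hbH)
    rw [htop, index_top, one_mul, pow_succ] at hindex
    have := Nat.two_pow_pos (k + 1)
    omega
  have htwo : (zpowers a).index = 2 :=
    index_eq_two_iff_exists_notMem_and.2 ⟨b, hbH, fun g => (hcover g).symm⟩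
  rw [htwo, pow_succ _ (k + 1)] at hindex
  exact ⟨hk, by omega, hb, hrel, hbH, hcover⟩

namespace IsQuasidihedralPair

theorem pow_two_pow_ne_one (hQ : IsQuasidihedralPair a b k) : a ^ 2 ^ k ≠ 1 :=
  pow_ne_one_of_lt_orderOf (by positivity) <| by
    rw [hQ.orderOf_eq]
    exact Nat.pow_lt_pow_right one_lt_two k.lt_succ_self

theorem sq_eq_one_iff (hQ : IsQuasidihedralPair a b k) (hx : x ∈ zpowers a) :
    x ^ 2 = 1 ↔ x = 1 ∨ x = a ^ 2 ^ k :=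
  sq_eq_one_iff_of_mem_zpowers (by rw [hQ.orderOf_eq, pow_succ']) hx

theorem conj_eq_pow (hQ : IsQuasidihedralPair a b k) (hx : x ∉ zpowers a) (hy : y ∈ zpowers a) :
    x * y * x⁻¹ = y ^ (2 ^ k - 1) := by
  have hu := (hQ.mem_or_mul_mem x).resolve_left hx
  have hbconj : b * y * b⁻¹ = y ^ (2 ^ k - 1) := by
    obtain ⟨j, rfl⟩ := mem_zpowers_iff.1 hy
    rw [← conj_zpow, hQ.conj_eq, ← zpow_natCast, ← zpow_mul, ← zpow_natCast, ← zpow_mul, mul_comm]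
  have hbinv : b⁻¹ = b := inv_eq_of_mul_eq_one_right (by rw [← sq, hQ.sq_eq_one])
  calc x * y * x⁻¹ = x * b * (b⁻¹ * y * b) * (x * b)⁻¹ := by group
    _ = x * b * (b * y * b⁻¹) * (x * b)⁻¹ := by rw [hbinv]
    _ = x * b * y ^ (2 ^ k - 1) * (x * b)⁻¹ := by rw [hbconj]
    _ = y ^ (2 ^ k - 1) := by
      rw [(commute_of_mem_zpowers hu (pow_mem hy _)).eq, mul_inv_cancel_right]

theorem commute_iff_of_notMem (hQ : IsQuasidihedralPair a b k) (hx : x ∉ zpowers a)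
    (hy : y ∈ zpowers a) : Commute x y ↔ y = 1 ∨ y = a ^ 2 ^ k := by
  have hy2 : y ^ 2 ^ (k + 1) = 1 := by
    rw [← hQ.orderOf_eq, ← orderOf_dvd_iff_pow_eq_one]
    exact orderOf_dvd_of_mem_zpowers hy
  have hk : 2 ^ k - 1 = 2 ^ k - 2 + 1 := by
    have := Nat.one_lt_two_pow (n := k) (by have := hQ.two_le; omega)
    omega
  -- `x` conjugates `y` to `y ^ (2 ^ k - 1)`, so they commute iff `y ^ (2 ^ k - 2) = 1`.
  rw [← hQ.sq_eq_one_iff hy, ← pow_two_pow_sub_two_eq_one_iff hQ.two_le hy2,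
    ← mul_eq_right (b := y), ← pow_succ, ← hk, ← hQ.conj_eq_pow hx hy, mul_inv_eq_iff_eq_mul]
  rfl

theorem mem_center_iff (hQ : IsQuasidihedralPair a b k) {g : G} :
    g ∈ center G ↔ g = 1 ∨ g = a ^ 2 ^ k := by
  constructor
  · intro hg
    have hcomm : ∀ h, Commute g h := fun h => (Subgroup.mem_center_iff.1 hg h).symm
    have hgH : g ∈ zpowers a := by
      by_contra hgH
      have ha2 : a ^ 2 = 1 := (hQ.sq_eq_one_iff (mem_zpowers a)).2
        ((hQ.commute_iff_of_notMem hgH (mem_zpowers a)).1 (hcomm a))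
      have hle := Nat.le_of_dvd two_pos (orderOf_dvd_of_pow_eq_one ha2)
      rw [hQ.orderOf_eq] at hle
      have := Nat.pow_le_pow_right two_pos (show 3 ≤ k + 1 by have := hQ.two_le; omega)
      omega
    exact (hQ.commute_iff_of_notMem hQ.notMem_zpowers hgH).1 (hcomm b).symm
  · intro hg
    have hgH : g ∈ zpowers a := hg.elim (· ▸ one_mem _) (· ▸ pow_mem (mem_zpowers a) _)
    refine Subgroup.mem_center_iff.2 fun h => ?_
    by_cases hh : h ∈ zpowers a
    · exact commute_of_mem_zpowers hh hgH
    · exact (hQ.commute_iff_of_notMem hh hgH).2 hg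

theorem center_le_zpowers (hQ : IsQuasidihedralPair a b k) : center G ≤ zpowers a := by
  intro g hg
  rcases hQ.mem_center_iff.1 hg with rfl | rfl
  · exact one_mem _
  · exact pow_mem (mem_zpowers a) _

theorem commute_iff_mem_center_or_mul_inv_mem_center (hQ : IsQuasidihedralPair a b k)
    (hx : x ∉ zpowers a) : Commute x y ↔ y ∈ center G ∨ y * x⁻¹ ∈ center G := by
  by_cases hy : y ∈ zpowers a
  · have hyx : y * x⁻¹ ∉ center G := fun h =>
      hx (by simpa using mul_mem (inv_mem (hQ.center_le_zpowers h)) hy)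
    rw [hQ.commute_iff_of_notMem hx hy, hQ.mem_center_iff]
    tauto
  · have hu : y * x⁻¹ ∈ zpowers a := by
      simpa using mul_mem ((hQ.mem_or_mul_mem y).resolve_left hy)
        (inv_mem ((hQ.mem_or_mul_mem x).resolve_left hx))
    have hyZ : y ∉ center G := fun h => hy (hQ.center_le_zpowers h)
    have hcomm : Commute x y ↔ Commute x (y * x⁻¹) :=
      ⟨fun h => h.mul_right (Commute.refl x).inv_right,
        fun h => by simpa using h.mul_right (Commute.refl x)⟩
    rw [hcomm, hQ.commute_iff_of_notMem hx hu, ← hQ.mem_center_iff]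
    tauto

theorem commute_iff_of_mem (hQ : IsQuasidihedralPair a b k) (hx : x ∈ zpowers a)
    (hxZ : x ∉ center G) : Commute x y ↔ y ∈ zpowers a := by
  refine ⟨fun h => ?_, commute_of_mem_zpowers hx⟩
  by_contra hy
  exact hxZ (hQ.mem_center_iff.2 ((hQ.commute_iff_of_notMem hy hx).1 h.symm))

theorem commute_of_commute_of_notMem_center (hQ : IsQuasidihedralPair a b k)
    (hy : y ∉ center G) {u v : G} (hu : Commute y u) (hv : Commute y v) : Commute u v := by
  by_cases hyH : y ∈ zpowers a
  · exact commute_of_mem_zpowers ((hQ.commute_iff_of_mem hyH hy).1 hu)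
      ((hQ.commute_iff_of_mem hyH hy).1 hv)
  · rcases (hQ.commute_iff_mem_center_or_mul_inv_mem_center hyH).1 hu with hu | hu
    · exact (Subgroup.mem_center_iff.1 hu v).symm
    · have hc : Commute (u * y⁻¹) v := (Subgroup.mem_center_iff.1 hu v).symm
      simpa using hc.mul_left hv

end IsQuasidihedralPair

end Quasidihedral

namespace IsQuasidihedralPair

variable {G : Type*} [Group G] [Fintype G] {a b : G} {k : ℕ}

theorem card_mem_zpowers (hQ : IsQuasidihedralPair a b k) :
    #{g : G | g ∈ zpowers a} = 2 ^ (k + 1) := by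
  rw [← Fintype.card_subtype, ← Nat.card_eq_fintype_card, Nat.card_zpowers, hQ.orderOf_eq]

theorem card_notMem_center_mem_zpowers (hQ : IsQuasidihedralPair a b k) :
    #{g : G | g ∉ center G ∧ g ∈ zpowers a} = 2 ^ (k + 1) - 2 := by
  have hsdiff : ({g | g ∉ center G ∧ g ∈ zpowers a} : Finset G) =
      ({g | g ∈ zpowers a} : Finset G) \ {1, a ^ 2 ^ k} := by
    ext g
    simp only [mem_filter_univ, mem_sdiff, mem_insert, mem_singleton, hQ.mem_center_iff]
    tauto
  have hsub : ({1, a ^ 2 ^ k} : Finset G) ⊆ ({g | g ∈ zpowers a} : Finset G) := by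
    intro g hg
    rw [mem_filter_univ]
    exact hQ.center_le_zpowers (hQ.mem_center_iff.2 (by simpa using hg))
  rw [hsdiff, card_sdiff_of_subset hsub, card_pair hQ.pow_two_pow_ne_one.symm,
    hQ.card_mem_zpowers]

theorem card_notMem_center_notMem_zpowers (hQ : IsQuasidihedralPair a b k) :
    #{g : G | g ∉ center G ∧ g ∉ zpowers a} = 2 ^ (k + 1) := by
  have hindex : (zpowers a).index = 2 := index_eq_two_iff_exists_notMem_and.2
    ⟨b, hQ.notMem_zpowers, fun g => (hQ.mem_or_mul_mem g).symm⟩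
  have hcard : Fintype.card G = 2 * 2 ^ (k + 1) := by
    rw [← Nat.card_eq_fintype_card, ← index_mul_card, hindex, Nat.card_zpowers, hQ.orderOf_eq]
  have hsplit := card_filter_add_card_filter_not (s := univ) (· ∈ zpowers a)
  rw [card_univ, hcard, hQ.card_mem_zpowers] at hsplit
  have hfilter : ({g | g ∉ center G ∧ g ∉ zpowers a} : Finset G) =
      ({g | g ∉ zpowers a} : Finset G) := by
    ext g
    simp only [mem_filter_univ, and_iff_right_iff_imp]
    exact fun hg hZ => hg (hQ.center_le_zpowers hZ)
  rw [hfilter]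
  omega

theorem degree_commGraph (hQ : IsQuasidihedralPair a b k) (x : {g : G // g ∉ center G}) :
    (commGraph G).degree x = if (x : G) ∈ zpowers a then 2 ^ (k + 1) - 3 else 1 := by
  have hdeg := commGraph_degree_add_one x
  split_ifs with hx
  · rw [filter_congr fun g _ => by rw [hQ.commute_iff_of_mem hx x.2],
      hQ.card_notMem_center_mem_zpowers] at hdeg
    omega
  · have hpair : ({g | g ∉ center G ∧ Commute (x : G) g} : Finset G) =
        {(x : G), a ^ 2 ^ k * x} := by
      ext g
      rw [mem_filter_univ, hQ.commute_iff_mem_center_or_mul_inv_mem_center hx, mem_insert,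
        mem_singleton, ← mul_inv_eq_one, ← mul_inv_eq_iff_eq_mul, ← hQ.mem_center_iff]
      constructor
      · rintro ⟨hg, hg' | hg'⟩
        · exact absurd hg' hg
        · exact hg'
      · intro hg
        refine ⟨fun hgZ => x.2 ?_, Or.inr hg⟩
        simpa using mul_mem (inv_mem hg) hgZ
    rw [hpair, card_pair fun h => hQ.pow_two_pow_ne_one (by simpa using h)] at hdeg
    omega

theorem sum_degree_commGraph_add (hQ : IsQuasidihedralPair a b k) :
    ∑ x, (((commGraph G).degree x : ℝ) + (2 ^ (k + 1) - 3 : ℕ)) =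
      (2 ^ (k + 1) - 2) * (3 * 2 ^ (k + 1) - 6) := by
  have hN : 2 ^ 2 ≤ 2 ^ (k + 1) := Nat.pow_le_pow_right two_pos (by have := hQ.two_le; omega)
  calc ∑ x, (((commGraph G).degree x : ℝ) + (2 ^ (k + 1) - 3 : ℕ))
      = ∑ x : {g : G // g ∉ center G},
          if (x : G) ∈ zpowers a then 2 * (2 ^ (k + 1) - 3) else (2 ^ (k + 1) - 2 : ℝ) := by
        refine sum_congr rfl fun x _ => ?_
        rw [hQ.degree_commGraph x]
        split_ifs <;> push_cast [Nat.cast_sub (show 3 ≤ 2 ^ (k + 1) by omega)] <;> ring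
    _ = ∑ g ∈ ({g | g ∉ center G} : Finset G),
          if g ∈ zpowers a then 2 * (2 ^ (k + 1) - 3) else (2 ^ (k + 1) - 2 : ℝ) :=
        (sum_subtype _ (fun g => mem_filter_univ g) fun g =>
          if g ∈ zpowers a then 2 * (2 ^ (k + 1) - 3) else (2 ^ (k + 1) - 2 : ℝ)).symm
    _ = #{g : G | g ∉ center G ∧ g ∈ zpowers a} * (2 * (2 ^ (k + 1) - 3)) +
          #{g : G | g ∉ center G ∧ g ∉ zpowers a} * (2 ^ (k + 1) - 2 : ℝ) := by
        rw [sum_ite, sum_const, sum_const, filter_filter, filter_filter, nsmul_eq_mul,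
          nsmul_eq_mul]
    _ = (2 ^ (k + 1) - 2) * (3 * 2 ^ (k + 1) - 6) := by
        rw [hQ.card_notMem_center_mem_zpowers, hQ.card_notMem_center_notMem_zpowers,
          Nat.cast_sub (by omega)]
        push_cast
        ring

theorem graphEnergy_commGraph (hQ : IsQuasidihedralPair a b k) :
    graphEnergy (commGraph G) = 3 * 2 ^ (k + 1) - 6 := by
  have hN : 2 ^ 2 ≤ 2 ^ (k + 1) := Nat.pow_le_pow_right two_pos (by have := hQ.two_le; omega)
  have hE := (isCluster_commGraph fun _ hy _ _ => hQ.commute_of_commute_of_notMem_center hy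
    ).graphEnergy_mul_eq (2 ^ (k + 1) - 3) fun x => by
      rw [hQ.degree_commGraph x]
      split_ifs
      exacts [Or.inr rfl, Or.inl rfl]
  rw [hQ.sum_degree_commGraph_add, Nat.cast_sub (by omega)] at hE
  have hpos : (2 : ℝ) ^ (k + 1) - 2 ≠ 0 := by
    have : (2 : ℝ) ^ 2 ≤ 2 ^ (k + 1) := by exact_mod_cast hN
    linarith
  apply mul_right_cancel₀ hpos
  push_cast at hE
  linear_combination hE

end IsQuasidihedralPair

/-- The energy of the commuting graph of the quasidihedral group
`QD_{2^n} = ⟨a, b : a^(2^(n-1)) = b² = 1, b a b⁻¹ = a^(2^(n-2) - 1)⟩` of order `2^n`,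
`n ≥ 4`. -/
theorem energy_commGraph_quasidihedral
    (n : ℕ) (hn : 4 ≤ n)
    (G : Type*) [Group G] [Fintype G] (a b : G)
    (ha : a ^ (2 ^ (n - 1)) = 1) (hb : b ^ 2 = 1)
    (hrel : b * a * b⁻¹ = a ^ (2 ^ (n - 2) - 1))
    (hgen : Subgroup.closure ({a, b} : Set G) = ⊤)
    (hcard : Fintype.card G = 2 ^ n) :
    graphEnergy (commGraph G) = 2 ^ n + 2 ^ (n - 1) - (6 : ℝ) := by
  obtain ⟨k, rfl⟩ : ∃ k, n = k + 2 := ⟨n - 2, by omega⟩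
  have hQ : IsQuasidihedralPair a b k :=
    isQuasidihedralPair_of_card (by omega) ha hb hrel hgen (by rw [Nat.card_eq_fintype_card, hcard])
  rw [hQ.graphEnergy_commGraph, show k + 2 - 1 = k + 1 by omega, pow_succ _ (k + 1)]
  ring
end

section
/- Let p be a prime, n ≥ 1, and let A(n, p) be the group of all 3×3 lower unitriangular matrices [[1,0,0],[a,1,0],[b,c,1]] with entries a, b, c in the field GF(p^n), under matrix multiplication. Then the energy of the commuting graph is E(Γ_{A(n, p)}) = 2p^{3n} − 4p^n − 2. -/
open scoped Classical

noncomputable instance (p n : ℕ) [Fact p.Prime] : Fintype (GaloisField p n) :=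
  Fintype.ofFinite _

/-- The underlying set of the group `A(n, p)` of all lower unitriangular matrices
`V(a, b, c) = [[1,0,0],[a,1,0],[b,c,1]]` with `a, b, c ∈ GF(p^n)`; an element
`(a, b, c)` represents the matrix `V(a, b, c)`. -/
abbrev UnitriangularGroup (p n : ℕ) [Fact p.Prime] : Type :=
  GaloisField p n × GaloisField p n × GaloisField p n

/-- The group structure of `A(n, p)`, given by the matrix multiplication rule
`V(a, b, c) · V(a', b', c') = V(a + a', b + b' + c a', c + c')`. -/
noncomputable instance (p n : ℕ) [Fact p.Prime] : Group (UnitriangularGroup p n) where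
  mul x y := ⟨x.1 + y.1, x.2.1 + y.2.1 + x.2.2 * y.1, x.2.2 + y.2.2⟩
  one := ⟨0, 0, 0⟩
  inv x := ⟨-x.1, x.2.2 * x.1 - x.2.1, -x.2.2⟩
  div x y := ⟨x.1 + -y.1, x.2.1 + (y.2.2 * y.1 - y.2.1) + x.2.2 * -y.1, x.2.2 + -y.2.2⟩
  npow n x := @npowRec _ ⟨⟨0, 0, 0⟩⟩
    ⟨fun x y => ⟨x.1 + y.1, x.2.1 + y.2.1 + x.2.2 * y.1, x.2.2 + y.2.2⟩⟩ n x
  zpow n x := @zpowRec _ ⟨⟨0, 0, 0⟩⟩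
    ⟨fun x y => ⟨x.1 + y.1, x.2.1 + y.2.1 + x.2.2 * y.1, x.2.2 + y.2.2⟩⟩
    ⟨fun x => ⟨-x.1, x.2.2 * x.1 - x.2.1, -x.2.2⟩⟩
    (@npowRec _ ⟨⟨0, 0, 0⟩⟩
      ⟨fun x y => ⟨x.1 + y.1, x.2.1 + y.2.1 + x.2.2 * y.1, x.2.2 + y.2.2⟩⟩) n x
  div_eq_mul_inv _ _ := rfl
  mul_assoc x y z := by
    refine Prod.ext ?_ (Prod.ext ?_ ?_)
    · exact add_assoc _ _ _
    · show (x.2.1 + y.2.1 + x.2.2 * y.1) + z.2.1 + (x.2.2 + y.2.2) * z.1 =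
        x.2.1 + (y.2.1 + z.2.1 + y.2.2 * z.1) + x.2.2 * (y.1 + z.1)
      ring
    · exact add_assoc _ _ _
  one_mul x := by
    refine Prod.ext ?_ (Prod.ext ?_ ?_)
    · exact zero_add _
    · show (0 : GaloisField p n) + x.2.1 + (0 : GaloisField p n) * x.1 = x.2.1
      ring
    · exact zero_add _
  mul_one x := by
    refine Prod.ext ?_ (Prod.ext ?_ ?_)
    · exact add_zero _
    · show x.2.1 + 0 + x.2.2 * (0 : GaloisField p n) = x.2.1
      ring
    · exact add_zero _
  inv_mul_cancel x := by
    refine Prod.ext ?_ (Prod.ext ?_ ?_)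
    · exact neg_add_cancel _
    · show (x.2.2 * x.1 - x.2.1) + x.2.1 + (-x.2.2) * x.1 = 0
      ring
    · exact neg_add_cancel _

/-! Two elements `V(a, b, c)`, `V(a', b', c')` of `A(n, p)` commute iff `c a' = c' a`, i.e. iff the
vectors `(a, c)` and `(a', c')` are proportional; the central elements are those with `(a, c) = 0`.
Hence commuting is an equivalence relation on the vertices of the commuting graph, which is a
disjoint union of cliques of size `m = q² - q` (with `q = p ^ n`). Its adjacency matrix satisfies
`A² = (m - 2) A + (m - 1) I`, so every eigenvalue `λ` is `m - 1` or `-1` and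
`m |λ| = (m - 2) λ + 2 (m - 1)`. Summing over the spectrum and using `tr A = 0` gives
`m E = 2 (m - 1) (q³ - q)`. -/

open Finset Matrix

theorem Matrix.IsHermitian.eigenvalues_sq_eq_of_mul_self_eq {V : Type*} [Fintype V]
    [DecidableEq V] {A : Matrix V V ℝ} (hA : A.IsHermitian) {a b : ℝ}
    (hsq : A * A = a • A + b • 1) (i : V) :
    hA.eigenvalues i ^ 2 = a * hA.eigenvalues i + b := by
  have hv := hA.mulVec_eigenvectorBasis i
  have hv0 : ⇑(hA.eigenvectorBasis i) ≠ 0 :=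
    (WithLp.ofLp_eq_zero 2).ne.2 (hA.eigenvectorBasis.orthonormal.ne_zero i)
  set v := ⇑(hA.eigenvectorBasis i)
  have h : (hA.eigenvalues i ^ 2 - (a * hA.eigenvalues i + b)) • v = 0 := by
    calc _ = (A * A) *ᵥ v - (a • A + b • 1) *ᵥ v := by
          rw [← mulVec_mulVec, hv, mulVec_smul, hv, add_mulVec, smul_mulVec, smul_mulVec,
            one_mulVec, hv]
          module
      _ = 0 := by rw [hsq, sub_self]
  linarith [(smul_eq_zero.mp h).resolve_right hv0]

theorem mul_abs_eq_of_sq_eq {m μ : ℝ} (hm : 1 ≤ m) (hμ : μ ^ 2 = (m - 2) * μ + (m - 1)) :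
    m * |μ| = (m - 2) * μ + 2 * (m - 1) := by
  have : (μ - (m - 1)) * (μ + 1) = 0 := by linear_combination hμ
  rcases mul_eq_zero.mp this with h | h
  · rw [sub_eq_zero.mp h, abs_of_nonneg (by linarith)]; ring
  · rw [eq_neg_of_add_eq_zero_left h, abs_neg, abs_one]; ring

section CliqueUnion

variable {V : Type*} [Fintype V] {G : SimpleGraph V} {r : V → V → Prop} (hr : Equivalence r)
  {m : ℕ} (hadj : ∀ x y, G.Adj x y ↔ x ≠ y ∧ r x y) (hcard : ∀ x, #{y | r x y} = m)
include hr hadj hcard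

theorem SimpleGraph.adjMatrix_mul_self_of_adj_iff_equivalence :
    G.adjMatrix ℝ * G.adjMatrix ℝ = ((m : ℝ) - 2) • G.adjMatrix ℝ + ((m : ℝ) - 1) • 1 := by
  set B : Matrix V V ℝ := of fun x y => if r x y then 1 else 0
  have hAB : G.adjMatrix ℝ = B - 1 := by
    ext x y
    by_cases hxy : x = y
    · subst hxy; simp [B, hr.refl]
    · simp [B, hadj, hxy]
  have hBB : B * B = (m : ℝ) • B := by
    ext x y
    have hxz (z : V) : r x z ∧ r z y ↔ r x z ∧ r x y :=
      ⟨fun h => ⟨h.1, hr.trans h.1 h.2⟩, fun h => ⟨h.1, hr.trans (hr.symm h.1) h.2⟩⟩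
    simp only [B, mul_apply, of_apply, ite_mul, one_mul, zero_mul, ← ite_and, hxz]
    by_cases hxy : r x y <;> simp [hxy, hcard]
  rw [hAB, show (B - 1) * (B - 1) = B * B - B - B + 1 by noncomm_ring, hBB]
  module

theorem graphEnergy_of_adj_iff_equivalence :
    m * graphEnergy G = 2 * ((m : ℝ) - 1) * Fintype.card V := by
  set hA := adjMatrix_isHermitian G
  have hm (x : V) : (1 : ℝ) ≤ m := by
    rw [← hcard x]
    exact_mod_cast Finset.card_pos.mpr ⟨x, by simp [hr.refl]⟩
  have habs (i : V) : m * |hA.eigenvalues i| = (m - 2) * hA.eigenvalues i + 2 * (m - 1) :=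
    mul_abs_eq_of_sq_eq (hm i)
      (hA.eigenvalues_sq_eq_of_mul_self_eq
        (G.adjMatrix_mul_self_of_adj_iff_equivalence hr hadj hcard) i)
  have htrace : ∑ i, hA.eigenvalues i = 0 := by
    simpa using hA.trace_eq_sum_eigenvalues.symm.trans (G.trace_adjMatrix ℝ)
  calc m * graphEnergy G = ∑ i, m * |hA.eigenvalues i| := mul_sum _ _ _
    _ = ∑ i, ((m - 2) * hA.eigenvalues i + 2 * (m - 1)) := sum_congr rfl fun i _ => habs i
    _ = (m - 2) * ∑ i, hA.eigenvalues i + Fintype.card V * (2 * (m - 1)) := by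
      rw [sum_add_distrib, ← mul_sum, sum_const, card_univ, nsmul_eq_mul]
    _ = 2 * ((m : ℝ) - 1) * Fintype.card V := by rw [htrace]; ring

end CliqueUnion

section CommutingGraph

open Subgroup

variable {G : Type*} [Group G] [Fintype G] [DecidableEq G]

theorem graphEnergy_commGraph_of_centralizer_trans
    (htrans : ∀ x y z : G, y ∉ center G → y ∈ centralizer {x} → z ∈ centralizer {y} →
      z ∈ centralizer {x})
    (m : ℕ) (hm : ∀ x ∉ center G, Nat.card (centralizer {x}) = Nat.card (center G) + m) :
    m * graphEnergy (commGraph G) = 2 * ((m : ℝ) - 1) * (Nat.card G - Nat.card (center G)) := by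
  have hclass (x : {g : G // g ∉ center G}) :
      #{y : {g : G // g ∉ center G} | y.1 ∈ centralizer {x.1}} = m := by
    have h : Nat.card ((centralizer {x.1} : Set G) \ center G : Set G) + Nat.card (center G) =
        Nat.card (centralizer {x.1}) :=
      Set.ncard_sdiff_add_ncard_of_subset (center_le_centralizer {x.1})
    rw [hm x x.2, add_comm, Nat.add_left_cancel_iff] at h
    rw [← Fintype.card_subtype, ← Nat.card_eq_fintype_card, ← h]
    exact Nat.card_congr ((Equiv.subtypeSubtypeEquivSubtypeInter _ _).trans
      (Equiv.subtypeEquivRight fun _ => and_comm))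
  have hV : Fintype.card {g : G // g ∉ center G} + Nat.card (center G) = Nat.card G := by
    rw [← Nat.card_eq_fintype_card]
    exact Set.ncard_compl_add_ncard (center G : Set G)
  have hV' : (Fintype.card {g : G // g ∉ center G} : ℝ) = Nat.card G - Nat.card (center G) := by
    rw [← hV]; push_cast; ring
  rw [← hV']
  exact graphEnergy_of_adj_iff_equivalence
    (r := fun x y : {g : G // g ∉ center G} => y.1 ∈ centralizer {x.1})
    ⟨fun _ => mem_centralizer_singleton_iff.2 rfl,
      fun h => mem_centralizer_singleton_iff.2 (mem_centralizer_singleton_iff.1 h).symm,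
      fun {_ y _} => htrans _ _ _ y.2⟩
    (fun _ _ => and_congr_right' (mem_centralizer_singleton_iff.trans eq_comm).symm) hclass

end CommutingGraph

section ProportionalVectors

variable {F : Type*} [Field F]

theorem cross_eq_trans {a₁ c₁ a₂ c₂ a₃ c₃ : F} (h₂ : (a₂, c₂) ≠ 0)
    (h₁₂ : c₁ * a₂ = c₂ * a₁) (h₂₃ : c₂ * a₃ = c₃ * a₂) : c₁ * a₃ = c₃ * a₁ := by
  by_cases ha₂ : a₂ = 0
  · have hc₂ : c₂ ≠ 0 := fun hc₂ => h₂ (by simp [ha₂, hc₂])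
    subst ha₂
    have ha₁ : a₁ = 0 := by simpa [hc₂] using h₁₂.symm
    have ha₃ : a₃ = 0 := by simpa [hc₂] using h₂₃
    simp [ha₁, ha₃]
  · exact mul_right_cancel₀ ha₂ (by linear_combination a₃ * h₁₂ + a₁ * h₂₃)

theorem card_cross_eq_of_ne_zero [Finite F] {a c : F} (h : (a, c) ≠ 0) :
    Nat.card {u : F × F // c * u.1 = u.2 * a} = Nat.card F := by
  refine (Nat.card_congr
    (Equiv.ofBijective (fun t : F => ⟨t • (a, c), by simp; ring⟩) ⟨?_, ?_⟩)).symm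
  · exact fun s t hst => smul_left_injective F h (congrArg Subtype.val hst)
  · rintro ⟨⟨u₁, u₂⟩, hu⟩
    by_cases ha : a = 0
    · have hc : c ≠ 0 := fun hc => h (by simp [ha, hc])
      refine ⟨u₂ / c, Subtype.ext (Prod.ext ?_ ?_)⟩
      · simpa [ha, hc, eq_comm] using hu
      · simp [hc]
    · refine ⟨u₁ / a, Subtype.ext (Prod.ext ?_ ?_)⟩
      · simp [ha]
      · simp only [Prod.smul_mk, smul_eq_mul]
        field_simp
        linear_combination hu

end ProportionalVectors

namespace UnitriangularGroup

/- `UnitriangularGroup p n` is a product type, so a bare `x * y` on it elaborates to the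
componentwise product; going through `centralizer` and `center` keeps the group law. -/

open Subgroup

variable {p n : ℕ} [Fact p.Prime]

theorem mem_centralizer_singleton_iff {x y : UnitriangularGroup p n} :
    y ∈ centralizer {x} ↔ x.2.2 * y.1 = y.2.2 * x.1 := by
  rw [Subgroup.mem_centralizer_singleton_iff]
  change (y.1 + x.1, y.2.1 + x.2.1 + y.2.2 * x.1, y.2.2 + x.2.2) =
    (x.1 + y.1, x.2.1 + y.2.1 + x.2.2 * y.1, x.2.2 + y.2.2) ↔ _
  simp only [Prod.mk.injEq, add_comm y.1, add_comm y.2.2, add_comm y.2.1, true_and, and_true,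
    add_right_inj, eq_comm]

theorem mem_center_iff {g : UnitriangularGroup p n} : g ∈ center _ ↔ g.1 = 0 ∧ g.2.2 = 0 := by
  simp only [Subgroup.mem_center_iff, ← Subgroup.mem_centralizer_singleton_iff,
    mem_centralizer_singleton_iff]
  refine ⟨fun h => ⟨?_, ?_⟩, fun ⟨ha, hc⟩ y => by simp [ha, hc]⟩
  · simpa [eq_comm] using h (0, 0, 1)
  · simpa using h (1, 0, 0)

theorem centralizer_trans {x y z : UnitriangularGroup p n} (hy : y ∉ center _) :
    y ∈ centralizer {x} → z ∈ centralizer {y} → z ∈ centralizer {x} := by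
  simp only [mem_centralizer_singleton_iff]
  exact cross_eq_trans fun h => hy (mem_center_iff.2 (Prod.mk_eq_zero.1 h))

theorem card_center : Nat.card (center (UnitriangularGroup p n)) = Nat.card (GaloisField p n) :=
  Nat.card_congr
    { toFun := fun g => g.1.2.1
      invFun := fun b => ⟨(0, b, 0), mem_center_iff.2 ⟨rfl, rfl⟩⟩
      left_inv := fun ⟨g, hg⟩ => by
        obtain ⟨ha, hc⟩ := mem_center_iff.1 hg
        ext <;> simp [ha, hc]
      right_inv := fun _ => rfl }

theorem card_centralizer {x : UnitriangularGroup p n} (hx : x ∉ center _) :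
    Nat.card (centralizer {x}) = Nat.card (GaloisField p n) * Nat.card (GaloisField p n) := by
  have hxz : (x.1, x.2.2) ≠ 0 := fun h => hx (mem_center_iff.2 (Prod.mk_eq_zero.1 h))
  calc Nat.card (centralizer {x})
      = Nat.card ({u : GaloisField p n × GaloisField p n // x.2.2 * u.1 = u.2 * x.1} ×
          GaloisField p n) :=
        Nat.card_congr
          { toFun := fun y => (⟨(y.1.1, y.1.2.2), mem_centralizer_singleton_iff.1 y.2⟩, y.1.2.1)
            invFun := fun u => ⟨(u.1.1.1, u.2, u.1.1.2), mem_centralizer_singleton_iff.2 u.1.2⟩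
            left_inv := fun _ => rfl
            right_inv := fun _ => rfl }
    _ = _ := by rw [Nat.card_prod, card_cross_eq_of_ne_zero hxz]

end UnitriangularGroup

/-- The energy of the commuting graph of the group `A(n, p)` of all `3 × 3` lower
unitriangular matrices over `GF(p^n)`: `E = 2 p^{3n} - 4 p^n - 2`. -/
theorem energy_commGraph_unitriangularGroup
    (p : ℕ) [Fact p.Prime] (n : ℕ) (hn : 1 ≤ n) :
    graphEnergy (commGraph (UnitriangularGroup p n)) =
      2 * (p : ℝ) ^ (3 * n) - 4 * (p : ℝ) ^ n - 2 := by
  set q := Nat.card (GaloisField p n)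
  have hq : (p : ℝ) ^ n = q := by exact_mod_cast (GaloisField.card p n (by omega)).symm
  have hq2 : (2 : ℝ) ≤ q := by exact_mod_cast Finite.one_lt_card (α := GaloisField p n)
  have hcentralizer (x) (hx : x ∉ Subgroup.center (UnitriangularGroup p n)) :
      Nat.card (Subgroup.centralizer {x}) =
        Nat.card (Subgroup.center (UnitriangularGroup p n)) + (q * q - q) := by
    rw [UnitriangularGroup.card_centralizer hx, UnitriangularGroup.card_center,
      Nat.add_sub_cancel' (Nat.le_mul_self q)]
  have h := graphEnergy_commGraph_of_centralizer_trans
    (fun _ _ _ => UnitriangularGroup.centralizer_trans) _ hcentralizer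
  rw [Nat.cast_sub (Nat.le_mul_self q), UnitriangularGroup.card_center, Nat.card_prod,
    Nat.card_prod] at h
  rw [pow_mul', hq]
  refine mul_left_cancel₀ (a := (q : ℝ) * q - q) (by nlinarith) ?_
  push_cast at h
  exact h.trans (by ring)
end

section
/- Let p be a prime and let G be a non-Abelian group of order p³. Then the energy of the commuting graph is E(Γ_G) = 2(p³ − 2p − 1). -/
open scoped Classical

/-!
In a non-abelian group of order `p³` the centre has order `p`: otherwise `G ⧸ Z(G)` would be
cyclic. Hence the centralizer of a noncentral element has order `p²` and is abelian, so commuting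
is transitive on noncentral elements and the commuting graph is a disjoint union of cliques of
size `p² - p`. Its adjacency matrix satisfies `A² = (k - 1) A + k I` with `k = p² - p - 1`, so
every eigenvalue is `-1` or `k`; as `tr A = 0`, the energy is `2 k |V| / (k + 1)`.
-/

open Polynomial

lemma Matrix.IsHermitian.eval_eigenvalues_eq_zero {n 𝕜 : Type*} [Fintype n] [DecidableEq n]
    [RCLike 𝕜] {A : Matrix n n 𝕜} (hA : A.IsHermitian) {q : ℝ[X]} (hq : aeval A q = 0)
    (i : n) : q.eval (hA.eigenvalues i) = 0 := by
  have : Nonempty n := ⟨i⟩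
  simpa [hq, spectrum.zero_eq] using
    spectrum.subset_polynomial_aeval A q ⟨_, hA.eigenvalues_mem_spectrum_real i, rfl⟩

namespace SimpleGraph

variable {V : Type*} [Fintype V] {Γ : SimpleGraph V}

-- `htrans` says that `Γ` is a disjoint union of cliques, each of size `k + 1` by regularity.
lemma adjMatrix_mul_self_eq_of_isRegularOfDegree {α : Type*} [Ring α] {k : ℕ}
    (hreg : Γ.IsRegularOfDegree k)
    (htrans : ∀ ⦃u v w⦄, Γ.Adj u v → Γ.Adj v w → u ≠ w → Γ.Adj u w) :
    Γ.adjMatrix α * Γ.adjMatrix α = ((k : α) - 1) • Γ.adjMatrix α + (k : α) • 1 := by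
  ext v w
  rw [adjMatrix_mul_apply]
  simp only [adjMatrix_apply, Finset.sum_boole, Matrix.add_apply, Matrix.smul_apply,
    Matrix.one_apply, smul_eq_mul]
  by_cases hvw : v = w
  · subst hvw
    have : (Γ.neighborFinset v).filter (Γ.Adj · v) = Γ.neighborFinset v := by
      ext u; simp [adj_comm]
    simp [this, ← hreg v]
  by_cases hadj : Γ.Adj v w
  · have hfilt : (Γ.neighborFinset v).filter (Γ.Adj · w) = (Γ.neighborFinset v).erase w := by
      ext u
      simp only [Finset.mem_filter, Finset.mem_erase, mem_neighborFinset]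
      exact ⟨fun h => ⟨h.2.ne, h.1⟩, fun h => ⟨h.2, htrans h.2.symm hadj h.1⟩⟩
    have hcard := Finset.card_erase_add_one ((Γ.mem_neighborFinset v w).2 hadj)
    rw [card_neighborFinset_eq_degree, hreg v, ← hfilt] at hcard
    simp [hfilt, hadj, hvw, ← hcard]
  · have hfilt : (Γ.neighborFinset v).filter (Γ.Adj · w) = ∅ := by
      ext u
      simp only [Finset.mem_filter, mem_neighborFinset, Finset.notMem_empty, iff_false]
      exact fun h => hadj (htrans h.1 h.2 hvw)
    simp [hfilt, hadj, hvw]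

lemma graphEnergy_eq_of_adjMatrix_mul_self {k : ℕ}
    (hA : Γ.adjMatrix ℝ * Γ.adjMatrix ℝ = ((k : ℝ) - 1) • Γ.adjMatrix ℝ + (k : ℝ) • 1) :
    graphEnergy Γ = 2 * k * Fintype.card V / (k + 1) := by
  set μ := (adjMatrix_isHermitian Γ).eigenvalues
  have hq : aeval (Γ.adjMatrix ℝ) ((X + 1) * (X - C (k : ℝ))) = 0 := by
    simp only [map_mul, map_add, map_sub, aeval_X, aeval_C, map_one,
      Algebra.algebraMap_eq_smul_one]
    rw [add_mul, mul_sub, mul_sub, hA]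
    simp only [Matrix.mul_smul, mul_one, one_mul, sub_smul, one_smul]
    abel
  have hroots (i : V) : μ i = -1 ∨ μ i = k := by
    simpa [sub_eq_zero, eq_neg_iff_add_eq_zero] using
      (adjMatrix_isHermitian Γ).eval_eigenvalues_eq_zero hq i
  -- `|λ|` agrees on `{-1, k}` with an affine function of `λ`, so only `tr A = 0` enters the sum.
  have habs (i : V) : |μ i| = ((k - 1) * μ i + 2 * k) / (k + 1) := by
    have hk : (k : ℝ) + 1 ≠ 0 := by positivity
    rcases hroots i with h | h <;> rw [h] <;> field_simp
    · rw [abs_neg, abs_one]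
      ring
    · rw [abs_of_nonneg (by positivity)]; ring
  have htrace : ∑ i, μ i = 0 := by
    simpa using ((adjMatrix_isHermitian Γ).trace_eq_sum_eigenvalues).symm
  rw [graphEnergy, Finset.sum_congr rfl fun i _ => habs i, ← Finset.sum_div,
    Finset.sum_add_distrib, ← Finset.mul_sum, htrace]
  simp only [mul_zero, zero_add, Finset.sum_const, Finset.card_univ, nsmul_eq_mul]
  ring

end SimpleGraph

open Subgroup

section OrderPrimeCube

variable {p : ℕ} [Fact p.Prime] {G : Type*} [Group G]

lemma card_center_of_card_eq_prime_pow_three (hG : Nat.card G = p ^ 3)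
    (hna : ∃ x y : G, x * y ≠ y * x) : Nat.card (center G) = p := by
  obtain ⟨k, hk0, hk⟩ := IsPGroup.card_center_eq_prime_pow hG (by norm_num)
  suffices k < 2 by rwa [show k = 1 by omega, pow_one] at hk
  by_contra! hk2
  -- otherwise `G ⧸ Z(G)` has order dividing `p`, hence is cyclic, and `G` is commutative
  have hindex : (center G).index ∣ p := by
    refine Nat.dvd_of_mul_dvd_mul_left (pow_pos (Fact.out : p.Prime).pos 2) ?_
    calc p ^ 2 * (center G).index ∣ p ^ k * (center G).index :=
          mul_dvd_mul_right (pow_dvd_pow p hk2) _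
      _ = p ^ 2 * p := by rw [← hk, card_mul_index, hG]; ring
  have := isCyclic_of_card_dvd_prime hindex
  obtain ⟨x, y, hxy⟩ := hna
  exact hxy ((isMulCommutative_of_isCyclic_quotient_center_self G).is_comm.comm x y)

lemma card_centralizer_of_card_eq_prime_pow_three (hG : Nat.card G = p ^ 3)
    (hna : ∃ x y : G, x * y ≠ y * x) {x : G} (hx : x ∉ center G) :
    Nat.card (centralizer {x}) = p ^ 2 := by
  have : Finite G := Nat.finite_of_card_ne_zero (by simp [hG, (Fact.out : p.Prime).ne_zero])
  have hZ := card_center_of_card_eq_prime_pow_three hG hna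
  have hZC : center G ≤ centralizer {x} := center_le_centralizer _
  have hxC : x ∈ centralizer {x} := mem_centralizer_singleton_iff.2 rfl
  obtain ⟨j, hj3, hj⟩ :=
    (Nat.dvd_prime_pow Fact.out).1 (hG ▸ card_subgroup_dvd_card (centralizer {x}))
  have hj0 : j ≠ 0 := by
    rintro rfl
    have := hZ ▸ hj ▸ card_dvd_of_le hZC
    exact (Fact.out : p.Prime).one_lt.ne' (Nat.dvd_one.1 this)
  have hj1 : j ≠ 1 := by
    rintro rfl
    exact hx (eq_of_le_of_card_ge hZC (by rw [hj, hZ, pow_one]) ▸ hxC)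
  have hj3 : j ≠ 3 := by
    rintro rfl
    have htop := (card_eq_iff_eq_top _).1 (hj.trans hG.symm)
    exact hx (mem_center_iff.2 fun g => mem_centralizer_singleton_iff.1 (htop ▸ mem_top g))
  obtain rfl : j = 2 := by omega
  exact hj

lemma commute_of_commute_of_card_eq_prime_pow_three (hG : Nat.card G = p ^ 3)
    (hna : ∃ x y : G, x * y ≠ y * x) {x y z : G} (hx : x ∉ center G) (hy : Commute x y)
    (hz : Commute x z) : Commute y z := by
  have := IsPGroup.isMulCommutative_of_card_eq_prime_sq
    (card_centralizer_of_card_eq_prime_pow_three hG hna hx)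
  exact congrArg Subtype.val (this.is_comm.comm ⟨y, mem_centralizer_singleton_iff.2 hy.eq.symm⟩
    ⟨z, mem_centralizer_singleton_iff.2 hz.eq.symm⟩)

end OrderPrimeCube

section CommGraph

variable {p : ℕ} [Fact p.Prime] {G : Type*} [Group G]

lemma commGraph_adj_trans (hG : Nat.card G = p ^ 3) (hna : ∃ x y : G, x * y ≠ y * x)
    ⦃u v w : {g : G // g ∉ center G}⦄ (huv : (commGraph G).Adj u v)
    (hvw : (commGraph G).Adj v w) (huw : u ≠ w) : (commGraph G).Adj u w :=
  ⟨huw, commute_of_commute_of_card_eq_prime_pow_three hG hna v.2 huv.2.symm hvw.2⟩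

variable [Fintype G]

lemma commGraph_isRegularOfDegree (hG : Nat.card G = p ^ 3) (hna : ∃ x y : G, x * y ≠ y * x) :
    (commGraph G).IsRegularOfDegree (p ^ 2 - p - 1) := by
  intro v
  have himage : Subtype.val '' insert v ((commGraph G).neighborSet v) =
      (centralizer {(v : G)} : Set G) \ center G := by
    ext g
    simp only [Set.mem_image, Set.mem_insert_iff, SimpleGraph.mem_neighborSet, Set.mem_sdiff,
      SetLike.mem_coe, mem_centralizer_singleton_iff]
    constructor
    · rintro ⟨u, rfl | ⟨-, hvu⟩, rfl⟩
      exacts [⟨rfl, u.2⟩, ⟨hvu.symm, u.2⟩]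
    · rintro ⟨hgv, hgZ⟩
      by_cases h : g = v
      · exact ⟨v, Or.inl rfl, h.symm⟩
      · exact ⟨⟨g, hgZ⟩, Or.inr ⟨fun e => h (congrArg Subtype.val e).symm, hgv.symm⟩, rfl⟩
  have hcount := Set.ncard_sdiff_add_ncard_of_subset (center_le_centralizer ({(v : G)} : Set G))
  rw [← himage, Set.ncard_image_of_injective _ Subtype.val_injective,
    Set.ncard_insert_of_notMem (commGraph G).notMem_neighborSet_self, ← Nat.card_coe_set_eq,
    Nat.card_eq_fintype_card, SimpleGraph.card_neighborSet_eq_degree, ← Nat.card_coe_set_eq,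
    ← Nat.card_coe_set_eq, SetLike.coe_sort_coe, SetLike.coe_sort_coe,
    card_center_of_card_eq_prime_pow_three hG hna,
    card_centralizer_of_card_eq_prime_pow_three hG hna v.2] at hcount
  omega

lemma card_commGraph_vertices (hG : Nat.card G = p ^ 3) (hna : ∃ x y : G, x * y ≠ y * x) :
    Fintype.card {g : G // g ∉ center G} = p ^ 3 - p := by
  rw [Fintype.card_subtype_compl, ← Nat.card_eq_fintype_card, ← Nat.card_eq_fintype_card, hG,
    card_center_of_card_eq_prime_pow_three hG hna]

end CommGraph

/-- The energy of the commuting graph of a non-Abelian group of order `p³`: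
`E(Γ_G) = 2(p³ - 2p - 1)`. -/
theorem energy_commGraph_of_card_p_cubed
    (p : ℕ) (hp : p.Prime) (G : Type*) [Group G] [Fintype G]
    (hcard : Fintype.card G = p ^ 3) (hna : ∃ x y : G, x * y ≠ y * x) :
    graphEnergy (commGraph G) = 2 * ((p : ℝ) ^ 3 - 2 * p - 1) := by
  have : Fact p.Prime := ⟨hp⟩
  rw [← Nat.card_eq_fintype_card] at hcard
  rw [SimpleGraph.graphEnergy_eq_of_adjMatrix_mul_self
      (SimpleGraph.adjMatrix_mul_self_eq_of_isRegularOfDegree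
        (commGraph_isRegularOfDegree hcard hna) (commGraph_adj_trans hcard hna)),
    card_commGraph_vertices hcard hna]
  have hp2 : (2 : ℝ) ≤ p := by exact_mod_cast hp.two_le
  have hdeg : ((p ^ 2 - p - 1 : ℕ) : ℝ) = p ^ 2 - p - 1 := by
    rw [Nat.sub_sub, Nat.cast_sub (by nlinarith [hp.two_le])]
    push_cast
    ring
  have hverts : ((p ^ 3 - p : ℕ) : ℝ) = p ^ 3 - p := by
    rw [Nat.cast_sub (Nat.le_self_pow (by norm_num) p)]
    push_cast
    ring
  rw [hdeg, hverts, div_eq_iff (by nlinarith)]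
  ring
end

section
/- Let G be a finite non-Abelian group that is a 4-centralizer group, i.e., the set {C_G(x) : x ∈ G} of centralizers of elements of G has exactly 4 elements. Then the energy of the commuting graph is E(Γ_G) = 6(|Z(G)| − 1). -/
open scoped Classical

/-!
The proper centralizers of a `4`-centralizer group are three subgroups `A, B, C` that cover `G`
and meet pairwise in `Z = Z(G)` (a group is never the union of two proper subgroups, so each of
them has an element outside the other two, which pins down the centralizers of its noncentral
elements). Left multiplication by a fixed element of `B ∖ Z` moves `A ∖ Z` into `C`, which
forces `A ∖ Z` to be a single coset of `Z`. Hence two noncentral elements commute iff they are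
congruent modulo `Z`, `x ↦ C(x)` identifies `G ⧸ Z` with the four centralizers, and `Γ_G` is
three disjoint copies of the complete graph on `|Z|` vertices, of energy `3 · 2(|Z| - 1)`.
-/

open Subgroup

section Subgroups

variable {G : Type*} [Group G]

theorem Subgroup.exists_notMem_notMem_of_ne_top {H K : Subgroup G} (hH : H ≠ ⊤) (hK : K ≠ ⊤) :
    ∃ g, g ∉ H ∧ g ∉ K := by
  by_contra! hHK
  obtain ⟨p, hp⟩ := SetLike.exists_not_mem_of_ne_top H hH rfl
  obtain ⟨q, hq⟩ := SetLike.exists_not_mem_of_ne_top K hK rfl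
  have hqH : q ∈ H := by_contra fun hqH => hq (hHK q hqH)
  have hpqK : p * q ∉ K := fun hpq => hq (by simpa using K.mul_mem (K.inv_mem (hHK p hp)) hpq)
  have hpqH : p * q ∈ H := by_contra fun hpqH => hpqK (hHK _ hpqH)
  exact hp (by simpa using H.mul_mem hpqH (H.inv_mem hqH))

/-- Left multiplication by any `u ∈ B ∖ Z` maps `A ∖ Z` into `C`, so
`x⁻¹ y = (u x)⁻¹ (u y) ∈ A ⊓ C`. -/
theorem inv_mul_mem_of_forall_mem_or_mem_or_mem {Z A B C : Subgroup G}
    (hcover : ∀ g, g ∈ A ∨ g ∈ B ∨ g ∈ C) (hAB : A ⊓ B ≤ Z) (hAC : A ⊓ C ≤ Z) (hBZ : ¬B ≤ Z)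
    {x y : G} (hx : x ∈ A) (hxZ : x ∉ Z) (hy : y ∈ A) (hyZ : y ∉ Z) : x⁻¹ * y ∈ Z := by
  obtain ⟨u, hu, huZ⟩ := SetLike.not_le_iff_exists.1 hBZ
  have hmul : ∀ w ∈ A, w ∉ Z → u * w ∈ C := fun w hw hwZ => by
    rcases hcover (u * w) with h | h | h
    · exact absurd (hAB ⟨by simpa using A.mul_mem h (A.inv_mem hw), hu⟩) huZ
    · exact absurd (hAB ⟨hw, by simpa using B.mul_mem (B.inv_mem hu) h⟩) hwZ
    · exact h
  have hxy : x⁻¹ * y = (u * x)⁻¹ * (u * y) := by group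
  exact hAC ⟨A.mul_mem (A.inv_mem hx) hy,
    hxy ▸ C.mul_mem (C.inv_mem (hmul x hx hxZ)) (hmul y hy hyZ)⟩

end Subgroups

section Centralizers

variable {G : Type*} [Group G]

theorem commute_of_inv_mul_mem_center {x y : G} (h : x⁻¹ * y ∈ center G) : x * y = y * x := by
  have hz : Commute x (x⁻¹ * y) := mem_center_iff.1 h x
  simpa using ((Commute.refl x).mul_right hz).eq

theorem centralizer_eq_of_inv_mul_mem_center {x y : G} (h : x⁻¹ * y ∈ center G) :
    centralizer {x} = centralizer {y} := by
  have hz : ∀ g, Commute g (x⁻¹ * y) := mem_center_iff.1 h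
  ext g
  simp only [mem_centralizer_singleton_iff]
  exact ⟨fun hg => by simpa using (Commute.mul_right hg (hz g)).eq,
    fun hg => by simpa using (Commute.mul_right hg (hz g).inv_right).eq⟩

theorem centralizer_singleton_eq_top_iff {x : G} : centralizer {x} = ⊤ ↔ x ∈ center G :=
  centralizer_eq_top_iff_subset.trans Set.singleton_subset_iff

theorem exists_centralizers_of_card_eq_four
    (h4 : Nat.card (Set.range fun x : G => centralizer ({x} : Set G)) = 4) :
    ∃ a b c : G, a ∉ center G ∧ b ∉ center G ∧ c ∉ center G ∧
      centralizer {a} ≠ centralizer {b} ∧ centralizer {a} ≠ centralizer {c} ∧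
      centralizer {b} ≠ centralizer {c} ∧
      ∀ x ∉ center G, centralizer {x} = centralizer {a} ∨ centralizer {x} = centralizer {b} ∨
        centralizer {x} = centralizer {c} := by
  set S := Set.range fun x : G => centralizer ({x} : Set G)
  have htop : ⊤ ∈ S := ⟨1, by simp⟩
  have hS : S.ncard = 4 := by rwa [← Nat.card_coe_set_eq]
  have h3 : (S \ {⊤}).ncard = 3 := by
    rw [Set.ncard_sdiff_singleton_of_mem htop, hS]
  obtain ⟨A, B, C, hAB, hAC, hBC, hABC⟩ := Set.ncard_eq_three.1 h3
  have hproper : ∀ D ∈ S \ {⊤}, ∃ d ∉ center G, centralizer {d} = D := by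
    rintro D ⟨⟨d, rfl⟩, hd⟩
    exact ⟨d, fun h => hd (centralizer_singleton_eq_top_iff.2 h), rfl⟩
  obtain ⟨a, ha, rfl⟩ := hproper A (by simp [hABC])
  obtain ⟨b, hb, rfl⟩ := hproper B (by simp [hABC])
  obtain ⟨c, hc, rfl⟩ := hproper C (by simp [hABC])
  refine ⟨a, b, c, ha, hb, hc, hAB, hAC, hBC, fun x hx => ?_⟩
  have : centralizer {x} ∈ S \ {⊤} := ⟨⟨x, rfl⟩, centralizer_singleton_eq_top_iff.not.2 hx⟩
  simpa [hABC] using this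

section ThreeCentralizers

variable {a b c : G}

/-- Choose `g` outside `C(b) ∪ C(c)`: then `C(g) = C(a)`, and any noncentral `w ∈ C(a)` has `g` in
its centralizer, which is therefore neither `C(b)` nor `C(c)`. -/
theorem centralizer_eq_of_mem_centralizer
    (hcent : ∀ x ∉ center G, centralizer {x} = centralizer {a} ∨
      centralizer {x} = centralizer {b} ∨ centralizer {x} = centralizer {c})
    (hb : b ∉ center G) (hc : c ∉ center G) {w : G}
    (hw : w ∈ centralizer {a}) (hwZ : w ∉ center G) : centralizer {w} = centralizer {a} := by
  obtain ⟨g, hgb, hgc⟩ :=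
    Subgroup.exists_notMem_notMem_of_ne_top (centralizer_singleton_eq_top_iff.not.2 hb)
      (centralizer_singleton_eq_top_iff.not.2 hc)
  have hg : ∀ x ∉ center G, g ∈ centralizer {x} → centralizer {x} = centralizer {a} :=
    fun x hx hgx => (hcent x hx).resolve_right fun h => h.elim (fun h => hgb (h ▸ hgx))
      (fun h => hgc (h ▸ hgx))
  have hga : centralizer {g} = centralizer {a} :=
    hg g (fun h => hgb (center_le_centralizer _ h)) (mem_centralizer_singleton_iff.2 rfl)
  rw [← hga, mem_centralizer_singleton_iff] at hw
  exact hg w hwZ (mem_centralizer_singleton_iff.2 hw.symm)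

theorem centralizer_inf_centralizer_le_center
    (hcent : ∀ x ∉ center G, centralizer {x} = centralizer {a} ∨
      centralizer {x} = centralizer {b} ∨ centralizer {x} = centralizer {c})
    (ha : a ∉ center G) (hb : b ∉ center G)
    (hc : c ∉ center G) (hab : centralizer {a} ≠ centralizer {b}) :
    centralizer {a} ⊓ centralizer {b} ≤ center G := by
  intro w ⟨hwa, hwb⟩
  by_contra hwZ
  have hcent' : ∀ x ∉ center G, centralizer {x} = centralizer {b} ∨
      centralizer {x} = centralizer {a} ∨ centralizer {x} = centralizer {c} :=
    fun x hx => or_left_comm.1 (hcent x hx)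
  exact hab ((centralizer_eq_of_mem_centralizer hcent hb hc hwa hwZ).symm.trans
    (centralizer_eq_of_mem_centralizer hcent' ha hc hwb hwZ))

theorem inv_mul_mem_center_of_mem_centralizer
    (hcent : ∀ x ∉ center G, centralizer {x} = centralizer {a} ∨
      centralizer {x} = centralizer {b} ∨ centralizer {x} = centralizer {c})
    (ha : a ∉ center G) (hb : b ∉ center G)
    (hc : c ∉ center G) (hab : centralizer {a} ≠ centralizer {b})
    (hac : centralizer {a} ≠ centralizer {c}) {x y : G} (hx : x ∈ centralizer {a})
    (hxZ : x ∉ center G) (hy : y ∈ centralizer {a}) (hyZ : y ∉ center G) :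
    x⁻¹ * y ∈ center G := by
  have hcover : ∀ g : G, g ∈ centralizer {a} ∨ g ∈ centralizer {b} ∨ g ∈ centralizer {c} := by
    intro g
    by_cases hg : g ∈ center G
    · exact Or.inl (center_le_centralizer _ hg)
    · have hgg : g ∈ centralizer {g} := mem_centralizer_singleton_iff.2 rfl
      rcases hcent g hg with h | h | h <;> rw [h] at hgg <;> simp [hgg]
  have hcent' : ∀ x ∉ center G, centralizer {x} = centralizer {a} ∨
      centralizer {x} = centralizer {c} ∨ centralizer {x} = centralizer {b} :=
    fun x hx => (hcent x hx).imp_right Or.symm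
  refine inv_mul_mem_of_forall_mem_or_mem_or_mem hcover ?_ ?_ ?_ hx hxZ hy hyZ
  · exact centralizer_inf_centralizer_le_center hcent ha hb hc hab
  · exact centralizer_inf_centralizer_le_center hcent' ha hc hb hac
  · exact fun h => hb (h (mem_centralizer_singleton_iff.2 rfl))

end ThreeCentralizers

theorem inv_mul_mem_center_of_commute_of_card_eq_four
    (h4 : Nat.card (Set.range fun x : G => centralizer ({x} : Set G)) = 4) {x y : G}
    (hx : x ∉ center G) (hy : y ∉ center G) (hxy : x * y = y * x) : x⁻¹ * y ∈ center G := by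
  obtain ⟨a, b, c, ha, hb, hc, hab, hac, hbc, hcent⟩ := exists_centralizers_of_card_eq_four h4
  have hxx : x ∈ centralizer {x} := mem_centralizer_singleton_iff.2 rfl
  have hyx : y ∈ centralizer {x} := mem_centralizer_singleton_iff.2 hxy.symm
  rcases hcent x hx with h | h | h <;> rw [h] at hxx hyx
  · exact inv_mul_mem_center_of_mem_centralizer hcent ha hb hc hab hac hxx hx hyx hy
  · exact inv_mul_mem_center_of_mem_centralizer (fun z hz => or_left_comm.1 (hcent z hz))
      hb ha hc hab.symm hbc hxx hx hyx hy
  · exact inv_mul_mem_center_of_mem_centralizer (fun z hz => or_rotate.2 (hcent z hz))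
      hc ha hb hac.symm hbc.symm hxx hx hyx hy

theorem index_center_eq_card_range_centralizer
    (h : ∀ x y : G, x ∉ center G → y ∉ center G → x * y = y * x → x⁻¹ * y ∈ center G) :
    (center G).index = Nat.card (Set.range fun x : G => centralizer ({x} : Set G)) := by
  refine Nat.card_congr ((Quotient.congrRight fun x y => ?_).trans
    (Setoid.quotientKerEquivRange _))
  rw [QuotientGroup.leftRel_apply, Setoid.ker_def]
  refine ⟨centralizer_eq_of_inv_mul_mem_center, fun hxy => ?_⟩
  have hZ : x ∈ center G ↔ y ∈ center G := by
    rw [← centralizer_singleton_eq_top_iff, ← centralizer_singleton_eq_top_iff, hxy]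
  by_cases hx : x ∈ center G
  · exact mul_mem (inv_mem hx) (hZ.1 hx)
  · have hyx : y ∈ centralizer {x} := hxy ▸ mem_centralizer_singleton_iff.2 rfl
    exact h x y hx (hZ.not.1 hx) (mem_centralizer_singleton_iff.1 hyx).symm

end Centralizers

section Energy

open Finset
open scoped Matrix

variable {V : Type*} [Fintype V]

theorem Matrix.IsHermitian.eigenvalues_mul_self_eq {M : Matrix V V ℝ} (hM : M.IsHermitian)
    {c d : ℝ} (h : M * M = c • M + d • 1) (i : V) :
    hM.eigenvalues i * hM.eigenvalues i = c * hM.eigenvalues i + d := by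
  set v := ⇑(hM.eigenvectorBasis i)
  have hv : M *ᵥ v = hM.eigenvalues i • v := hM.mulVec_eigenvectorBasis i
  have hv0 : v ≠ 0 := fun h0 => hM.eigenvectorBasis.orthonormal.ne_zero i (by
    ext j; exact congrFun h0 j)
  have hMM : (M * M) *ᵥ v = (c * hM.eigenvalues i + d) • v := by
    rw [h, Matrix.add_mulVec, Matrix.smul_mulVec, Matrix.smul_mulVec, Matrix.one_mulVec, hv,
      smul_smul, add_smul]
  rw [← Matrix.mulVec_mulVec, hv, Matrix.mulVec_smul, hv, smul_smul] at hMM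
  exact smul_left_injective ℝ hv0 hMM

/-- Every eigenvalue `μ` is a root of `(X - (n - 1)) (X + 1)`, on which
`n |μ| = (n - 2) μ + 2 (n - 1)`; summing, the `μ`-terms add up to the trace `0`. -/
theorem natCast_mul_graphEnergy_of_adjMatrix_mul_self (Γ : SimpleGraph V) (n : ℕ)
    (h : Γ.adjMatrix ℝ * Γ.adjMatrix ℝ = ((n : ℝ) - 2) • Γ.adjMatrix ℝ + ((n : ℝ) - 1) • 1) :
    n * graphEnergy Γ = 2 * ((n : ℝ) - 1) * Fintype.card V := by
  set hA := adjMatrix_isHermitian Γ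
  have habs : ∀ i, n * |hA.eigenvalues i| = (n - 2) * hA.eigenvalues i + 2 * (n - 1) := by
    intro i
    have hroot : (hA.eigenvalues i - (n - 1)) * (hA.eigenvalues i + 1) = 0 := by
      linear_combination hA.eigenvalues_mul_self_eq h i
    rcases mul_eq_zero.1 hroot with hμ | hμ
    · rw [sub_eq_zero.1 hμ]
      rcases n.eq_zero_or_pos with rfl | hn
      · norm_num
      · have : (1 : ℝ) ≤ n := Nat.one_le_cast.2 hn
        rw [abs_of_nonneg (by linarith)]; ring
    · rw [eq_neg_of_add_eq_zero_left hμ, abs_neg, abs_one]; ring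
  have htrace : ∑ i, hA.eigenvalues i = 0 := by
    have := hA.trace_eq_sum_eigenvalues
    rw [SimpleGraph.trace_adjMatrix] at this
    simpa using this.symm
  calc n * graphEnergy Γ = ∑ i, ((n - 2) * hA.eigenvalues i + 2 * (n - 1)) := by
        rw [graphEnergy, mul_sum]; exact sum_congr rfl fun i _ => habs i
    _ = (n - 2) * ∑ i, hA.eigenvalues i + 2 * (n - 1) * Fintype.card V := by
        rw [sum_add_distrib, ← mul_sum, sum_const, card_univ, nsmul_eq_mul]; ring
    _ = 2 * (n - 1) * Fintype.card V := by rw [htrace]; ring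

/-- A disjoint union of cliques `K_n` (the fibres of `f`): its adjacency matrix is `B - 1` for the
"same fibre" matrix `B`, and `B² = n B`. -/
theorem adjMatrix_mul_self_of_adj_iff {α : Type*} [DecidableEq α] (Γ : SimpleGraph V) (f : V → α)
    (n : ℕ) (hadj : ∀ x y, Γ.Adj x y ↔ x ≠ y ∧ f x = f y) (hfib : ∀ x, #{y | f y = f x} = n) :
    Γ.adjMatrix ℝ * Γ.adjMatrix ℝ = ((n : ℝ) - 2) • Γ.adjMatrix ℝ + ((n : ℝ) - 1) • 1 := by
  set B : Matrix V V ℝ := Matrix.of fun x y => if f x = f y then 1 else 0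
  have hAB : Γ.adjMatrix ℝ = B - 1 := by
    ext x y
    by_cases hxy : x = y
    · simp [B, hxy]
    · simp [B, hxy, hadj, Matrix.one_apply_ne hxy]
  have hBB : B * B = (n : ℝ) • B := by
    ext x y
    simp only [B, Matrix.mul_apply, Matrix.of_apply, Matrix.smul_apply, smul_eq_mul, mul_ite,
      mul_one, mul_zero]
    by_cases hxy : f x = f y
    · simp +contextual [hxy, ← hfib y, eq_comm]
    · refine (sum_eq_zero fun w _ => ?_).trans (by simp [hxy])
      split_ifs with hxw hwy <;> simp_all
  rw [hAB]
  calc (B - 1) * (B - 1) = B * B - 2 • B + 1 := by noncomm_ring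
    _ = _ := by rw [hBB]; module

end Energy

section Cosets

open Finset

variable {G : Type*} [Group G]

theorem card_filter_mk_eq_of_notMem [Fintype G] {H : Subgroup G} [DecidablePred (· ∈ H)]
    [DecidableEq (G ⧸ H)] {x : G} (hx : x ∉ H) :
    #{y : {g : G // g ∉ H} | (y : G ⧸ H) = x} = Nat.card H := by
  have hfib : ∀ {g : G}, (g : G ⧸ H) = x → g ∉ H := fun hg hgH =>
    hx (by simpa using H.mul_mem hgH (QuotientGroup.eq.1 hg))
  rw [← Fintype.card_subtype, ← Nat.card_eq_fintype_card,
    Nat.card_congr (Equiv.subtypeSubtypeEquivSubtype hfib)]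
  exact (QuotientGroup.card_preimage_mk H {(x : G ⧸ H)}).trans (by simp)

theorem card_notMem_eq [Fintype G] (H : Subgroup G) [DecidablePred (· ∈ H)] :
    Fintype.card {g : G // g ∉ H} = (H.index - 1) * Nat.card H := by
  rw [Fintype.card_subtype_compl, ← Nat.card_eq_fintype_card, ← Nat.card_eq_fintype_card,
    ← H.index_mul_card, Nat.sub_one_mul]

end Cosets

theorem energy_commGraph_of_four_centralizer_general
    (G : Type*) [Group G] [Fintype G]
    (h4 : Nat.card (Set.range fun x : G => Subgroup.centralizer ({x} : Set G)) = 4) :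
    graphEnergy (commGraph G) = 6 * ((Nat.card (Subgroup.center G) : ℝ) - 1) := by
  have hcomm : ∀ x y : G, x ∉ center G → y ∉ center G → x * y = y * x → x⁻¹ * y ∈ center G :=
    fun x y hx hy => inv_mul_mem_center_of_commute_of_card_eq_four h4 hx hy
  have hadj : ∀ x y, (commGraph G).Adj x y ↔ x ≠ y ∧ (x : G ⧸ center G) = y := fun x y =>
    and_congr_right fun _ =>
      (⟨hcomm x y x.2 y.2, commute_of_inv_mul_mem_center⟩ : _ ↔ _).trans QuotientGroup.eq.symm
  have hsq := adjMatrix_mul_self_of_adj_iff (commGraph G) (fun x => ((x : G) : G ⧸ center G))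
    (Nat.card (center G)) hadj fun x => card_filter_mk_eq_of_notMem x.2
  have hE := natCast_mul_graphEnergy_of_adjMatrix_mul_self _ _ hsq
  rw [card_notMem_eq, index_center_eq_card_range_centralizer hcomm, h4] at hE
  have hZ : (0 : ℝ) < Nat.card (center G) := by exact_mod_cast Nat.card_pos
  apply mul_left_cancel₀ hZ.ne'
  push_cast at hE
  linarith

/-- If `G` is a finite non-Abelian `4`-centralizer group (it has exactly `4` distinct
centralizers of elements), then `E(Γ_G) = 6(|Z(G)| - 1)`. -/
theorem energy_commGraph_of_four_centralizer
    (G : Type*) [Group G] [Fintype G] (hna : ∃ x y : G, x * y ≠ y * x)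
    (h4 : Nat.card (Set.range fun x : G => Subgroup.centralizer ({x} : Set G)) = 4) :
    graphEnergy (commGraph G) = 6 * ((Nat.card (Subgroup.center G) : ℝ) - 1) :=
  energy_commGraph_of_four_centralizer_general G h4
end

section
/- Let G be a finite non-Abelian group that is a 5-centralizer group, i.e., the set {C_G(x) : x ∈ G} of centralizers of elements of G has exactly 5 elements. Then the energy of the commuting graph satisfies E(Γ_G) = 8(2|Z(G)| − 1) or E(Γ_G) = 10|Z(G)| − 8. -/
open scoped Classical

/-!
Commuting noncentral elements `x`, `y` of a `5`-centralizer group have the same centralizer: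
otherwise some `w ∈ C(x) \ C(y)` makes `C(x)`, `C(y)`, `C(w)`, `C(yw)` the four proper
centralizers, and `x`, which commutes with each of `x`, `y`, `w`, `yw`, would commute with every
element. So the four proper centralizers `Cᵢ` pairwise meet in `Z = Z(G)`, and the commuting graph
is the disjoint union of the four cliques `Cᵢ \ Z`. Counting `G \ Z` with `mᵢ = [Cᵢ : Z]` and
`h = [G : Z]` gives `∑ mᵢ = h + 3`, while `2 ≤ mᵢ`, `mᵢ ∣ h` and `mᵢ mⱼ ≤ h`; this forces
`h ∈ {6, 9}`. Finally a disjoint union of `k` cliques on `N` vertices has energy `2 (N - k)`: its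
adjacency matrix plus `1` is a Gram matrix of rank `k` whose nonzero eigenvalues are clique sizes,
so every eigenvalue is `-1` or nonnegative, and the eigenvalues sum to `0`.
-/

open Matrix Unitary Finset

namespace Matrix.IsHermitian

variable {𝕜 n : Type*} [RCLike 𝕜] [Fintype n] [DecidableEq n] {A : Matrix n n 𝕜}

lemma rank_add_one (hA : A.IsHermitian) :
    (A + 1).rank = Fintype.card {i // hA.eigenvalues i ≠ -1} := by
  have hdiag : A + 1 = conjStarAlgAut 𝕜 _ hA.eigenvectorUnitary
      (diagonal (RCLike.ofReal ∘ (hA.eigenvalues + 1))) := by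
    conv_lhs => rw [hA.spectral_theorem]
    rw [← map_one (conjStarAlgAut 𝕜 _ hA.eigenvectorUnitary), ← map_add, ← diagonal_one,
      diagonal_add]
    congr 2
    ext i
    simp
  have hneg_one (x : ℝ) : algebraMap ℝ 𝕜 x = -1 ↔ x = -1 := by
    rw [← map_one (algebraMap ℝ 𝕜), ← map_neg, (FaithfulSMul.algebraMap_injective ℝ 𝕜).eq_iff]
  rw [hdiag, conjStarAlgAut_apply, ← Unitary.coe_star]
  simp [-isUnit_iff_ne_zero, -Unitary.coe_star, rank_diagonal, add_eq_zero_iff_eq_neg, hneg_one]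

end Matrix.IsHermitian

lemma Finset.sum_abs_eq_two_mul_card_of_sum_eq_zero {ι : Type*} (s : Finset ι) {μ : ι → ℝ}
    (hsum : ∑ i ∈ s, μ i = 0) (hμ : ∀ i ∈ s, μ i = -1 ∨ 0 ≤ μ i) :
    ∑ i ∈ s, |μ i| = 2 * #{i ∈ s | μ i = -1} := by
  have habs : ∀ i ∈ s, |μ i| = μ i + if μ i = -1 then 2 else 0 := by
    intro i hi
    rcases hμ i hi with h | h
    · rw [h]
      norm_num
    · simp [abs_of_nonneg h, show μ i ≠ -1 by linarith]
  rw [Finset.sum_congr rfl habs, Finset.sum_add_distrib, hsum, Finset.sum_ite, Finset.sum_const]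
  simp [mul_comm]

namespace SimpleGraph

variable {V ι : Type*} {Γ : SimpleGraph V} {f : V → ι}

lemma adjMatrix_add_one_apply {R : Type*} [NonAssocSemiring R]
    (hadj : ∀ u v, Γ.Adj u v ↔ u ≠ v ∧ f u = f v) (u v : V) :
    (Γ.adjMatrix R + 1) u v = if f u = f v then 1 else 0 := by
  by_cases huv : u = v
  · simp [huv]
  · simp [huv, hadj]

variable [Fintype V]

lemma one_le_of_mulVec_adjMatrix_add_one (hadj : ∀ u v, Γ.Adj u v ↔ u ≠ v ∧ f u = f v)
    {x : V → ℝ} {c : ℝ} (hx : x ≠ 0) (hc : c ≠ 0)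
    (hxc : (Γ.adjMatrix ℝ + 1) *ᵥ x = c • x) : 1 ≤ c := by
  set S : ι → ℝ := fun i => ∑ w with f w = i, x w
  have hS (u : V) : c * x u = S (f u) := by
    rw [← smul_eq_mul, ← Pi.smul_apply, ← hxc]
    simp [Matrix.mulVec, dotProduct, adjMatrix_add_one_apply hadj, S, Finset.sum_filter, eq_comm]
  obtain ⟨u, hu⟩ := Function.ne_iff.mp hx
  -- summing `hS` over the fibre of `f u` shows that `c` is the size of that fibre
  have hfibre : c * S (f u) = #{w | f w = f u} * S (f u) := by
    calc c * S (f u) = ∑ w with f w = f u, c * x w := Finset.mul_sum ..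
      _ = ∑ w with f w = f u, S (f u) := Finset.sum_congr rfl fun w hw => by
            rw [hS, (Finset.mem_filter.mp hw).2]
      _ = #{w | f w = f u} * S (f u) := by rw [Finset.sum_const, nsmul_eq_mul]
  have hSu : S (f u) ≠ 0 := by rw [← hS]; exact mul_ne_zero hc hu
  have hcard : 1 ≤ #{w | f w = f u} := Finset.card_pos.mpr ⟨u, by simp⟩
  rw [mul_right_cancel₀ hSu hfibre]
  exact_mod_cast hcard

lemma eigenvalues_adjMatrix_eq_neg_one_or_nonneg
    (hadj : ∀ u v, Γ.Adj u v ↔ u ≠ v ∧ f u = f v) (i : V) :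
    (adjMatrix_isHermitian Γ).eigenvalues i = -1 ∨ 0 ≤ (adjMatrix_isHermitian Γ).eigenvalues i := by
  set hA := adjMatrix_isHermitian Γ
  refine or_iff_not_imp_left.mpr fun hi => ?_
  have hvec : (Γ.adjMatrix ℝ + 1) *ᵥ ⇑(hA.eigenvectorBasis i) =
      (hA.eigenvalues i + 1) • ⇑(hA.eigenvectorBasis i) := by
    rw [Matrix.add_mulVec, hA.mulVec_eigenvectorBasis, Matrix.one_mulVec, add_smul, one_smul]
  have := one_le_of_mulVec_adjMatrix_add_one hadj
    ((WithLp.ofLp_eq_zero 2).ne.2 (hA.eigenvectorBasis.orthonormal.ne_zero i))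
    (fun h => hi (eq_neg_of_add_eq_zero_left h)) hvec
  linarith

variable [Fintype ι]

lemma rank_adjMatrix_add_one (hadj : ∀ u v, Γ.Adj u v ↔ u ≠ v ∧ f u = f v)
    (hf : Function.Surjective f) : (Γ.adjMatrix ℝ + 1).rank = Fintype.card ι := by
  set M : Matrix V ι ℝ := Matrix.of fun v i => if f v = i then 1 else 0
  have hMMt : Γ.adjMatrix ℝ + 1 = M * Mᵀ := by
    ext u v
    simp [M, adjMatrix_add_one_apply hadj, Matrix.mul_apply, eq_comm]
  have hM_left_inv :
      (Matrix.of fun i v => if v = Function.surjInv hf i then (1 : ℝ) else 0) * M = 1 := by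
    ext i j
    simp only [M, Matrix.mul_apply, Matrix.of_apply, ite_mul, one_mul, zero_mul,
      Finset.sum_ite_eq', Finset.mem_univ, if_true, Function.surjInv_eq hf, Matrix.one_apply]
  have hrankM : M.rank = Fintype.card ι := by
    refine le_antisymm M.rank_le_card_width ?_
    calc Fintype.card ι = (1 : Matrix ι ι ℝ).rank := Matrix.rank_one.symm
      _ ≤ M.rank := hM_left_inv ▸ Matrix.rank_mul_le_right _ _
  rw [hMMt, Matrix.rank_self_mul_transpose, hrankM]

theorem graphEnergy_eq_of_adj_iff (hadj : ∀ u v, Γ.Adj u v ↔ u ≠ v ∧ f u = f v)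
    (hf : Function.Surjective f) :
    graphEnergy Γ = 2 * ((Fintype.card V : ℝ) - Fintype.card ι) := by
  set hA := adjMatrix_isHermitian Γ
  have hsum : ∑ i, hA.eigenvalues i = 0 := by
    simpa using hA.trace_eq_sum_eigenvalues.symm.trans (Γ.trace_adjMatrix ℝ)
  have hcard : #{i | hA.eigenvalues i = -1} + Fintype.card ι = Fintype.card V := by
    rw [← rank_adjMatrix_add_one hadj hf, hA.rank_add_one, Fintype.card_subtype,
      Finset.card_filter_add_card_filter_not, Finset.card_univ]
  rw [graphEnergy, Finset.sum_abs_eq_two_mul_card_of_sum_eq_zero _ hsum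
    fun i _ => eigenvalues_adjMatrix_eq_neg_one_or_nonneg hadj i, ← hcard]
  push_cast
  ring

end SimpleGraph

lemma le_three_of_mul_le {a b c d n : ℕ} (hb : 2 ≤ b) (hc : 2 ≤ c) (hd : 2 ≤ d)
    (hab : a * b ≤ n) (hac : a * c ≤ n) (had : a * d ≤ n) (hsum : a + b + c + d + 1 = n + 4) :
    a ≤ 3 := by
  have hS : 6 ≤ b + c + d := by omega
  nlinarith

lemma eq_six_or_nine_of_sum_eq {α : Type*} {s : Finset α} (hs : s.card = 4) {m : α → ℕ} {n : ℕ}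
    (hm : ∀ a ∈ s, 2 ≤ m a) (hdvd : ∀ a ∈ s, m a ∣ n)
    (hmul : ∀ a ∈ s, ∀ b ∈ s, a ≠ b → m a * m b ≤ n) (hsum : ∑ a ∈ s, m a + 1 = n + 4) :
    n = 6 ∨ n = 9 := by
  obtain ⟨a, t, hat, rfl, ht⟩ := Finset.card_eq_succ.mp hs
  obtain ⟨b, c, d, hbc, hbd, hcd, rfl⟩ := Finset.card_eq_three.mp ht
  simp only [Finset.mem_insert, Finset.mem_singleton, not_or] at hat
  obtain ⟨hab, hac, had⟩ := hat
  simp only [Finset.mem_insert, Finset.mem_singleton, forall_eq_or_imp, forall_eq] at hm hdvd hmul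
  rw [Finset.sum_insert (by simp [hab, hac, had]), Finset.sum_insert (by simp [hbc, hbd]),
    Finset.sum_pair hcd] at hsum
  obtain ⟨ha2, hb2, hc2, hd2⟩ := hm
  simp only [ne_eq, not_true_eq_false, IsEmpty.forall_iff, not_false_eq_true, forall_const,
    true_and, and_true, hab, hac, had, hbc, hbd, hcd, Ne.symm hab, Ne.symm hac, Ne.symm had,
    hbc.symm, hbd.symm, hcd.symm] at hmul
  obtain ⟨⟨pab, pac, pad⟩, ⟨pba, pbc, pbd⟩, ⟨pca, pcb, pcd⟩, ⟨pda, pdb, pdc⟩⟩ := hmul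
  have ha3 := le_three_of_mul_le hb2 hc2 hd2 pab pac pad (by omega)
  have hb3 := le_three_of_mul_le ha2 hc2 hd2 pba pbc pbd (by omega)
  have hc3 := le_three_of_mul_le ha2 hb2 hd2 pca pcb pcd (by omega)
  have hd3 := le_three_of_mul_le ha2 hb2 hc2 pda pdb pdc (by omega)
  interval_cases m a <;> interval_cases m b <;> interval_cases m c <;> interval_cases m d <;> omega

namespace Subgroup

variable {G : Type*} [Group G]

variable (G) in
def properCentralizers : Set (Subgroup G) :=
  Set.range fun g : {g : G // g ∉ center G} => centralizer {(g : G)}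

lemma centralizer_singleton_eq_top_iff {x : G} : centralizer {x} = ⊤ ↔ x ∈ center G := by
  rw [centralizer_eq_top_iff_subset, Set.singleton_subset_iff, SetLike.mem_coe]

lemma commute_of_centralizer_eq {g t x : G} (h : centralizer {g} = centralizer {t})
    (ht : Commute t x) : Commute g x :=
  (mem_centralizer_singleton_iff.mp (h ▸ mem_centralizer_singleton_iff.mpr ht.symm)).symm

lemma encard_centralizers_eq_four {x y w : G} (hxy : Commute x y) (hwx : Commute w x)
    (hwy : ¬Commute w y) :
    ({centralizer {x}, centralizer {y}, centralizer {w}, centralizer {y * w}} :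
      Set (Subgroup G)).encard = 4 := by
  have hyw_y : ¬Commute (y * w) y := fun h =>
    hwy ((IsLeftRegular.all y).commute_mul_left_iff.mp h).symm
  have hyw_w : ¬Commute (y * w) w := fun h =>
    hwy ((IsRightRegular.all w).commute_mul_right_iff.mp h)
  have hxy_ne : centralizer {y} ≠ centralizer {x} := fun h =>
    hwy (commute_of_centralizer_eq h hwx.symm).symm
  have hxw_ne : centralizer {w} ≠ centralizer {x} := fun h =>
    hwy (commute_of_centralizer_eq h hxy)
  have hyw_ne : centralizer {w} ≠ centralizer {y} := fun h =>
    hwy (commute_of_centralizer_eq h.symm (Commute.refl w)).symm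
  have hxt_ne : centralizer {y * w} ≠ centralizer {x} := fun h =>
    hyw_y (commute_of_centralizer_eq h hxy)
  have hyt_ne : centralizer {y * w} ≠ centralizer {y} := fun h =>
    hyw_y (commute_of_centralizer_eq h (Commute.refl y))
  have hwt_ne : centralizer {y * w} ≠ centralizer {w} := fun h =>
    hyw_w (commute_of_centralizer_eq h (Commute.refl w))
  simp only [Set.encard_insert_of_notMem, Set.mem_insert_iff, Set.mem_singleton_iff,
    hxy_ne.symm, hxw_ne.symm, hxt_ne.symm, hyw_ne.symm, hyt_ne.symm, hwt_ne.symm, or_self,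
    not_false_eq_true, Set.encard_singleton]
  norm_num

lemma centralizer_le_of_commute (hP : (properCentralizers G).encard ≤ 4) {x y : G}
    (hx : x ∉ center G) (hy : y ∉ center G) (hxy : Commute x y) :
    centralizer {x} ≤ centralizer {y} := by
  intro w hwx
  by_contra hwy
  replace hwx : Commute w x := mem_centralizer_singleton_iff.mp hwx
  replace hwy : ¬Commute w y := fun h => hwy (mem_centralizer_singleton_iff.mpr h)
  have hw : w ∉ center G := fun h => hwy (mem_center_iff.mp h y).symm
  have hyw : y * w ∉ center G := fun h =>
    hwy ((IsLeftRegular.all y).commute_mul_left_iff.mp (mem_center_iff.mp h y).symm).symm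
  -- these four centralizers exhaust the proper ones, and each is that of an element commuting
  -- with `x`; hence `x` commutes with everything
  set F : Set (Subgroup G) :=
    {centralizer {x}, centralizer {y}, centralizer {w}, centralizer {y * w}}
  have hFP : F ⊆ properCentralizers G := by
    rintro C (rfl | rfl | rfl | rfl)
    exacts [⟨⟨x, hx⟩, rfl⟩, ⟨⟨y, hy⟩, rfl⟩, ⟨⟨w, hw⟩, rfl⟩, ⟨⟨y * w, hyw⟩, rfl⟩]
  have hPF : F = properCentralizers G := F.toFinite.eq_of_subset_of_encard_le hFP
    (hP.trans (encard_centralizers_eq_four hxy hwx hwy).ge)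
  refine hx (mem_center_iff.mpr fun g => ?_)
  by_cases hg : g ∈ center G
  · exact (mem_center_iff.mp hg x).symm
  obtain h | h | h | h : centralizer {g} ∈ F := hPF ▸ ⟨⟨g, hg⟩, rfl⟩
  exacts [commute_of_centralizer_eq h (Commute.refl x), commute_of_centralizer_eq h hxy.symm,
    commute_of_centralizer_eq h hwx, commute_of_centralizer_eq h (hxy.symm.mul_left hwx)]

lemma centralizer_eq_of_commute (hP : (properCentralizers G).encard ≤ 4) {x y : G}
    (hx : x ∉ center G) (hy : y ∉ center G) (hxy : Commute x y) :
    centralizer {x} = centralizer {y} :=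
  le_antisymm (centralizer_le_of_commute hP hx hy hxy) (centralizer_le_of_commute hP hy hx hxy.symm)

lemma range_centralizer_eq_insert_top :
    (Set.range fun x : G => centralizer {x}) = insert ⊤ (properCentralizers G) := by
  ext C
  constructor
  · rintro ⟨x, rfl⟩
    by_cases hx : x ∈ center G
    · exact Or.inl (centralizer_singleton_eq_top_iff.mpr hx)
    · exact Or.inr ⟨⟨x, hx⟩, rfl⟩
  · rintro (rfl | ⟨x, rfl⟩)
    exacts [⟨1, centralizer_singleton_eq_top_iff.mpr (one_mem _)⟩, ⟨x, rfl⟩]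

lemma top_notMem_properCentralizers : ⊤ ∉ properCentralizers G := by
  rintro ⟨x, hx⟩
  exact x.2 (centralizer_singleton_eq_top_iff.mp hx)

lemma ncard_range_centralizer [Finite G] :
    (Set.range fun x : G => centralizer {x}).ncard = (properCentralizers G).ncard + 1 := by
  rw [range_centralizer_eq_insert_top,
    Set.ncard_insert_of_notMem top_notMem_properCentralizers (Set.toFinite _)]

variable (G) in
def CentralizersEqOfCommute : Prop :=
  ∀ ⦃x y : G⦄, x ∉ center G → y ∉ center G → Commute x y → centralizer {x} = centralizer {y}

lemma centralizer_eq_iff_mem (hca : CentralizersEqOfCommute G) {C : Subgroup G}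
    (hC : C ∈ properCentralizers G) {g : G} (hg : g ∉ center G) :
    centralizer {g} = C ↔ g ∈ C := by
  obtain ⟨⟨a, ha⟩, rfl⟩ := hC
  exact ⟨fun h => h ▸ mem_centralizer_singleton_iff.mpr rfl,
    fun h => hca hg ha (mem_centralizer_singleton_iff.mp h)⟩

lemma center_le_of_mem_properCentralizers {C : Subgroup G} (hC : C ∈ properCentralizers G) :
    center G ≤ C := by
  obtain ⟨a, rfl⟩ := hC
  exact center_le_centralizer _

lemma inf_eq_center_of_mem_properCentralizers (hca : CentralizersEqOfCommute G)
    {C D : Subgroup G} (hC : C ∈ properCentralizers G) (hD : D ∈ properCentralizers G)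
    (hCD : C ≠ D) : C ⊓ D = center G := by
  refine le_antisymm (fun g hg => ?_)
    (le_inf (center_le_of_mem_properCentralizers hC) (center_le_of_mem_properCentralizers hD))
  by_contra hgZ
  exact hCD (((centralizer_eq_iff_mem hca hC hgZ).mpr hg.1).symm.trans
    ((centralizer_eq_iff_mem hca hD hgZ).mpr hg.2))

lemma card_add_card_mul_card_center [Fintype G] (hca : CentralizersEqOfCommute G) :
    Nat.card G + #(properCentralizers G).toFinset * Nat.card (center G) =
      ∑ C ∈ (properCentralizers G).toFinset, Nat.card C + Nat.card (center G) := by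
  have hcard (H : Subgroup G) [DecidablePred (· ∈ H)] : Nat.card H = #{g | g ∈ H} := by
    rw [Nat.card_eq_fintype_card, Fintype.card_subtype]
  have hfibre : ∀ C ∈ (properCentralizers G).toFinset,
      #{g | g ∉ center G ∧ centralizer {g} = C} + Nat.card (center G) = Nat.card C := by
    intro C hC
    rw [Set.mem_toFinset] at hC
    have : filter (fun g => g ∉ center G ∧ centralizer {g} = C) univ =
        filter (· ∈ C) univ \ filter (· ∈ center G) univ := by
      ext g
      by_cases hg : g ∈ center G
      · simp [hg]
      · simp [hg, centralizer_eq_iff_mem hca hC hg]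
    rw [this, hcard, hcard, card_sdiff_add_card_eq_card]
    exact monotone_filter_right _ fun g _ hg => center_le_of_mem_properCentralizers hC hg
  have hnoncentral : #{g | g ∉ center G} =
      ∑ C ∈ (properCentralizers G).toFinset, #{g | g ∉ center G ∧ centralizer {g} = C} := by
    rw [card_eq_sum_card_fiberwise (f := fun g => centralizer {g})
      (t := (properCentralizers G).toFinset)]
    · simp only [filter_filter]
    · intro g hg
      simpa using ⟨⟨g, (mem_filter.mp hg).2⟩, rfl⟩
  rw [← sum_congr rfl hfibre, sum_add_distrib, sum_const, smul_eq_mul, ← hnoncentral, hcard,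
    Nat.card_eq_fintype_card, ← card_univ, ← card_filter_add_card_filter_not (· ∉ center G)]
  simp only [not_not]
  ring

lemma card_eq_card_mul_relIndex {H K : Subgroup G} (hHK : H ≤ K) :
    Nat.card K = Nat.card H * H.relIndex K := by
  rw [← relIndex_bot_left, ← relIndex_bot_left]
  exact (relIndex_mul_relIndex ⊥ H K bot_le hHK).symm

lemma two_le_relIndex_center [Finite G] {C : Subgroup G} (hC : C ∈ properCentralizers G) :
    2 ≤ (center G).relIndex C := by
  obtain ⟨⟨a, ha⟩, rfl⟩ := hC
  have hne_zero : (center G).relIndex (centralizer {a}) ≠ 0 := right_ne_zero_of_mul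
    (card_eq_card_mul_relIndex (center_le_centralizer {a}) ▸ Nat.card_pos.ne')
  have hne_one : (center G).relIndex (centralizer {a}) ≠ 1 := fun h =>
    ha (relIndex_eq_one.mp h (mem_centralizer_singleton_iff.mpr rfl))
  change 2 ≤ (center G).relIndex (centralizer {a})
  omega

lemma relIndex_center_mul_relIndex_center_le_index [Finite G] (hca : CentralizersEqOfCommute G)
    {C D : Subgroup G} (hC : C ∈ properCentralizers G) (hD : D ∈ properCentralizers G)
    (hCD : C ≠ D) : (center G).relIndex C * (center G).relIndex D ≤ (center G).index := by
  have hidx : (center G).index ≤ C.index * D.index :=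
    inf_eq_center_of_mem_properCentralizers hca hC hD hCD ▸ index_inf_le
  have hC' := relIndex_mul_index (center_le_of_mem_properCentralizers hC)
  have hD' := relIndex_mul_index (center_le_of_mem_properCentralizers hD)
  have hpos : 0 < C.index * D.index := Nat.pos_of_ne_zero (mul_ne_zero index_ne_zero_of_finite
    index_ne_zero_of_finite)
  refine Nat.le_of_mul_le_mul_right ?_ hpos
  calc (center G).relIndex C * (center G).relIndex D * (C.index * D.index)
      = (center G).relIndex C * C.index * ((center G).relIndex D * D.index) := by ring
    _ = (center G).index * (center G).index := by rw [hC', hD']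
    _ ≤ (center G).index * (C.index * D.index) := Nat.mul_le_mul_left _ hidx

lemma sum_relIndex_center_add_one [Fintype G] (hca : CentralizersEqOfCommute G) :
    ∑ C ∈ (properCentralizers G).toFinset, (center G).relIndex C + 1 =
      (center G).index + #(properCentralizers G).toFinset := by
  refine Nat.eq_of_mul_eq_mul_left (Nat.card_pos (α := center G)) ?_
  have hcount := card_add_card_mul_card_center hca
  rw [← card_mul_index (center G), sum_congr rfl fun C hC => card_eq_card_mul_relIndex
    (center_le_of_mem_properCentralizers (Set.mem_toFinset.mp hC)), ← mul_sum] at hcount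
  linarith

lemma index_center_eq_six_or_nine [Fintype G] (hca : CentralizersEqOfCommute G)
    (hP : (properCentralizers G).ncard = 4) : (center G).index = 6 ∨ (center G).index = 9 := by
  have hs : (properCentralizers G).toFinset.card = 4 := by
    rw [← Set.ncard_eq_toFinset_card']
    exact hP
  refine eq_six_or_nine_of_sum_eq hs (fun C hC => two_le_relIndex_center (Set.mem_toFinset.mp hC))
    (fun C hC => Dvd.intro _ (relIndex_mul_index
      (center_le_of_mem_properCentralizers (Set.mem_toFinset.mp hC))))
    (fun C hC D hD hCD => relIndex_center_mul_relIndex_center_le_index hca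
      (Set.mem_toFinset.mp hC) (Set.mem_toFinset.mp hD) hCD) ?_
  rw [sum_relIndex_center_add_one hca, hs]

end Subgroup

open Subgroup in
theorem graphEnergy_commGraph_eq {G : Type*} [Group G] [Fintype G]
    (hca : CentralizersEqOfCommute G) :
    graphEnergy (commGraph G) = 2 * ((Nat.card (center G) : ℝ) * ((center G).index - 1) -
      (properCentralizers G).ncard) := by
  have hnoncentral : (Nat.card {g : G // g ∉ center G} : ℝ) + Nat.card (center G) =
      Nat.card (center G) * (center G).index := by
    exact_mod_cast (Set.ncard_compl_add_ncard (center G : Set G)).trans (card_mul_index _).symm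
  rw [SimpleGraph.graphEnergy_eq_of_adj_iff
      (f := Set.rangeFactorization fun g : {g : G // g ∉ center G} => centralizer {(g : G)}) ?_
      Set.rangeFactorization_surjective,
    ← Nat.card_eq_fintype_card, ← Nat.card_eq_fintype_card, Nat.card_coe_set_eq]
  · unfold properCentralizers
    linear_combination 2 * hnoncentral
  · intro u v
    refine and_congr_right fun _ => ⟨fun h => Subtype.ext (hca u.2 v.2 h), fun h => ?_⟩
    exact commute_of_centralizer_eq (congrArg Subtype.val h) (Commute.refl _)

theorem energy_commGraph_of_five_centralizer_general
    (G : Type*) [Group G] [Fintype G]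
    (h5 : Nat.card (Set.range fun x : G => Subgroup.centralizer ({x} : Set G)) = 5) :
    graphEnergy (commGraph G) = 8 * (2 * (Nat.card (Subgroup.center G) : ℝ) - 1) ∨
      graphEnergy (commGraph G) = 10 * (Nat.card (Subgroup.center G) : ℝ) - 8 := by
  have hP : (Subgroup.properCentralizers G).ncard = 4 := by
    have := Subgroup.ncard_range_centralizer (G := G)
    rw [← Nat.card_coe_set_eq, h5] at this
    omega
  have hca : Subgroup.CentralizersEqOfCommute G := fun _ _ =>
    Subgroup.centralizer_eq_of_commute (by rw [← (Set.toFinite _).cast_ncard_eq, hP]; rfl)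
  rw [graphEnergy_commGraph_eq hca, hP]
  obtain hindex | hindex := Subgroup.index_center_eq_six_or_nine hca hP <;> rw [hindex]
  · right
    push_cast
    ring
  · left
    push_cast
    ring

/-- If `G` is a finite non-Abelian `5`-centralizer group (it has exactly `5` distinct
centralizers of elements), then `E(Γ_G) = 8(2|Z(G)| - 1)` or `E(Γ_G) = 10|Z(G)| - 8`. -/
theorem energy_commGraph_of_five_centralizer
    (G : Type*) [Group G] [Fintype G] (hna : ∃ x y : G, x * y ≠ y * x)
    (h5 : Nat.card (Set.range fun x : G => Subgroup.centralizer ({x} : Set G)) = 5) :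
    graphEnergy (commGraph G) = 8 * (2 * (Nat.card (Subgroup.center G) : ℝ) - 1) ∨
      graphEnergy (commGraph G) = 10 * (Nat.card (Subgroup.center G) : ℝ) - 8 :=
  energy_commGraph_of_five_centralizer_general G h5
end
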